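/- arXiv:1912.09186 — 6 statements merged into one kernel-verified Lean document; each statement's English description precedes it below -/
import Mathlib

section
/- With the notation above, for every f ∈ H_K(𝒟) one has (M_z^* M_z)^{-1}(M_z^* f) = M_z^* δ f = (⊕_{i=1}^d Δ) M_z^* f, where (M_z^* M_z)^{-1} denotes the inverse of the invertible operator M_z^* M_z : Im M_z^* → Im M_z^*. Consequently the orthogonal projection of H_K(𝒟) onto Im M_z equals δ(M_z M_z^*) and coincides with the projection onto H_K(𝒟) ⊖ 𝒟, the orthogonal complement of the constant functions. -/
/-!
Let `P n` be the orthogonal projection onto `Hn n` and `K_w x = (ev w)† x` the kernel functions.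
Each `M_{z_i}` raises the degree by one, so `M_{z_i}^*` kills the constants and
`M_{z_i}^* P (n+1) = P n M_{z_i}^*`. Comparing the power series in `c` of `ev (c • z) (K_w x)`
shows that `P n (K_w x)` is the function `z ↦ a_n ⟪w, z⟫ⁿ x`, while
`M_{z_i}^* K_w x = conj (w_i) K_w x`. Hence `∑ M_{z_i} M_{z_i}^*` sends `P (n+1) (K_w x)` to
`∑ conj (w_i) M_{z_i} P n (K_w x) = (a_n / a_{n+1}) P (n+1) (K_w x)`; since the kernel functions
are total, `M_z M_z^*` acts by `a_n / a_{n+1}` on `Hn (n+1)` and by `0` on the constants. As `δ`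
acts by the reciprocal weights, `M_z M_z^* δ = δ M_z M_z^* = 1 - P 0`, and the remaining
identities are checked on the graded pieces, whose span is dense.
-/

open scoped InnerProductSpace Topology

theorem norm_smul_lt_one {𝕜 E : Type*} [NormedField 𝕜] [SeminormedAddCommGroup E]
    [NormedSpace 𝕜 E] {c : 𝕜} {z : E} (hc : ‖c‖ ≤ 1) (hz : ‖z‖ < 1) : ‖c • z‖ < 1 := by
  rw [norm_smul]
  exact mul_lt_one_of_nonneg_of_lt_one_right hc (norm_nonneg z) hz

theorem eq_of_hasSum_pow_smul {𝕜 E : Type*} [NontriviallyNormedField 𝕜] [NormedAddCommGroup E]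
    [NormedSpace 𝕜 E] {u v : ℕ → E} {s : 𝕜 → E}
    (hu : ∀ᶠ c in 𝓝 0, HasSum (fun n => c ^ n • u n) (s c))
    (hv : ∀ᶠ c in 𝓝 0, HasSum (fun n => c ^ n • v n) (s c)) : u = v := by
  have hseries : ∀ u : ℕ → E, (∀ᶠ c in 𝓝 0, HasSum (fun n => c ^ n • u n) (s c)) →
      HasFPowerSeriesAt s (fun n => ContinuousMultilinearMap.mkPiRing 𝕜 (Fin n) (u n)) 0 :=
    fun u hu => hasFPowerSeriesAt_iff.mpr (by simpa [FormalMultilinearSeries.coeff] using hu)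
  funext n
  simpa [FormalMultilinearSeries.coeff] using
    congrArg (·.coeff n) ((hseries u hu).eq_formalMultilinearSeries (hseries v hv))

section Graded

variable {𝕜 E : Type*} [RCLike 𝕜] [NormedAddCommGroup E] [InnerProductSpace 𝕜 E]

theorem ContinuousLinearMap.ext_of_dense_iSup {ι F : Type*} [AddCommGroup F] [Module 𝕜 F]
    [TopologicalSpace F] [T2Space F] {H : ι → Submodule 𝕜 E}
    (hdense : (⨆ i, H i).topologicalClosure = ⊤) {A B : E →L[𝕜] F}
    (h : ∀ i, ∀ g ∈ H i, A g = B g) : A = B := by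
  refine ContinuousLinearMap.ext_on ?_ (s := ⋃ i, (H i : Set E)) ?_
  · rwa [← Submodule.iSup_eq_span, Submodule.dense_iff_topologicalClosure_eq_top]
  · intro g hg
    obtain ⟨i, hi⟩ := Set.mem_iUnion.mp hg
    exact h i g hi

variable {ι : Type*} {H : ι → Submodule 𝕜 E}

theorem OrthogonalFamily.starProjection_eq_zero_of_mem
    (hortho : OrthogonalFamily 𝕜 (fun i => H i) fun i => (H i).subtypeₗᵢ)
    {i j : ι} (hij : i ≠ j) [(H i).HasOrthogonalProjection] {g : E} (hg : g ∈ H j) :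
    (H i).starProjection g = 0 :=
  (Submodule.starProjection_apply_eq_zero_iff (H i)).mpr
    (Submodule.isOrtho_iff_le.mp (hortho.isOrtho hij.symm) hg)

theorem OrthogonalFamily.hasSum_starProjection [CompleteSpace E] [∀ i, CompleteSpace (H i)]
    (hortho : OrthogonalFamily 𝕜 (fun i => H i) fun i => (H i).subtypeₗᵢ)
    (hdense : (⨆ i, H i).topologicalClosure = ⊤) (h : E) :
    HasSum (fun i => (H i).starProjection h) h := by
  have hV := IsHilbertSum.mkInternal _ hortho hdense.ge
  set v := hV.linearIsometryEquiv h
  have hv : HasSum (fun i => (v i : E)) h := by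
    simpa [v] using hV.hasSum_linearIsometryEquiv_symm v
  convert hv using 2 with i
  refine ((hv.mapL (H i).starProjection).unique (hasSum_single i fun j hj => ?_)).trans ?_
  · exact hortho.starProjection_eq_zero_of_mem (Ne.symm hj) (v j).2
  · exact Submodule.starProjection_eq_self_iff.mpr (v i).2

end Graded

section Shift

variable {𝕜 E : Type*} [RCLike 𝕜] [NormedAddCommGroup E] [InnerProductSpace 𝕜 E]
  {H : ℕ → Submodule 𝕜 E} [∀ n, CompleteSpace (H n)] {S : E →L[𝕜] E}

theorem starProjection_zero_comp_of_mapsTo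
    (hortho : OrthogonalFamily 𝕜 (fun n => H n) fun n => (H n).subtypeₗᵢ)
    (hdense : (⨆ n, H n).topologicalClosure = ⊤) (hS : ∀ n, ∀ f ∈ H n, S f ∈ H (n + 1)) :
    (H 0).starProjection ∘L S = 0 :=
  ContinuousLinearMap.ext_of_dense_iSup hdense fun n g hg =>
    hortho.starProjection_eq_zero_of_mem n.succ_ne_zero.symm (hS n g hg)

theorem starProjection_succ_comp_of_mapsTo
    (hortho : OrthogonalFamily 𝕜 (fun n => H n) fun n => (H n).subtypeₗᵢ)
    (hdense : (⨆ n, H n).topologicalClosure = ⊤) (hS : ∀ n, ∀ f ∈ H n, S f ∈ H (n + 1))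
    (n : ℕ) : (H (n + 1)).starProjection ∘L S = S ∘L (H n).starProjection := by
  refine ContinuousLinearMap.ext_of_dense_iSup hdense fun k g hg => ?_
  simp only [ContinuousLinearMap.comp_apply]
  rcases eq_or_ne k n with rfl | hkn
  · rw [Submodule.starProjection_eq_self_iff.mpr hg,
      Submodule.starProjection_eq_self_iff.mpr (hS k g hg)]
  · rw [hortho.starProjection_eq_zero_of_mem hkn.symm hg, map_zero,
      hortho.starProjection_eq_zero_of_mem (by omega) (hS k g hg)]

theorem adjoint_apply_eq_zero_of_mem_zero [CompleteSpace E]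
    (hortho : OrthogonalFamily 𝕜 (fun n => H n) fun n => (H n).subtypeₗᵢ)
    (hdense : (⨆ n, H n).topologicalClosure = ⊤) (hS : ∀ n, ∀ f ∈ H n, S f ∈ H (n + 1))
    {g : E} (hg : g ∈ H 0) : S.adjoint g = 0 := by
  have h := congrArg (fun A => A.adjoint g) (starProjection_zero_comp_of_mapsTo hortho hdense hS)
  simpa [ContinuousLinearMap.adjoint_comp, (isSelfAdjoint_starProjection (H 0)).adjoint_eq,
    Submodule.starProjection_eq_self_iff.mpr hg] using h

theorem adjoint_comp_starProjection_succ [CompleteSpace E]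
    (hortho : OrthogonalFamily 𝕜 (fun n => H n) fun n => (H n).subtypeₗᵢ)
    (hdense : (⨆ n, H n).topologicalClosure = ⊤) (hS : ∀ n, ∀ f ∈ H n, S f ∈ H (n + 1))
    (n : ℕ) : S.adjoint ∘L (H (n + 1)).starProjection = (H n).starProjection ∘L S.adjoint := by
  simpa [ContinuousLinearMap.adjoint_comp, (isSelfAdjoint_starProjection _).adjoint_eq] using
    congrArg ContinuousLinearMap.adjoint (starProjection_succ_comp_of_mapsTo hortho hdense hS n)

theorem adjoint_apply_mem_of_mem_succ [CompleteSpace E]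
    (hortho : OrthogonalFamily 𝕜 (fun n => H n) fun n => (H n).subtypeₗᵢ)
    (hdense : (⨆ n, H n).topologicalClosure = ⊤) (hS : ∀ n, ∀ f ∈ H n, S f ∈ H (n + 1))
    {n : ℕ} {g : E} (hg : g ∈ H (n + 1)) : S.adjoint g ∈ H n := by
  rw [← Submodule.starProjection_eq_self_iff.mpr hg, ← ContinuousLinearMap.comp_apply,
    adjoint_comp_starProjection_succ hortho hdense hS n, ContinuousLinearMap.comp_apply]
  exact Submodule.starProjection_apply_mem _ _

theorem adjoint_comp_eq_comp_adjoint_of_diagonal [CompleteSpace E]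
    (hortho : OrthogonalFamily 𝕜 (fun n => H n) fun n => (H n).subtypeₗᵢ)
    (hdense : (⨆ n, H n).topologicalClosure = ⊤) (hS : ∀ n, ∀ f ∈ H n, S f ∈ H (n + 1))
    {B D : E →L[𝕜] E} {β : ℕ → 𝕜} (hB0 : ∀ g ∈ H 0, B g ∈ H 0)
    (hB : ∀ n, ∀ g ∈ H (n + 1), B g = β n • g) (hD : ∀ n, ∀ g ∈ H n, D g = β n • g) :
    S.adjoint ∘L B = D ∘L S.adjoint := by
  refine ContinuousLinearMap.ext_of_dense_iSup hdense fun n g hg => ?_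
  rcases n with _ | n
  · simp [adjoint_apply_eq_zero_of_mem_zero hortho hdense hS hg,
      adjoint_apply_eq_zero_of_mem_zero hortho hdense hS (hB0 g hg)]
  · simp [hB n g hg, hD n _ (adjoint_apply_mem_of_mem_succ hortho hdense hS hg)]

theorem topologicalClosure_iSup_range_eq_orthogonal_zero {ι : Type*} {S : ι → E →L[𝕜] E}
    (hortho : OrthogonalFamily 𝕜 (fun n => H n) fun n => (H n).subtypeₗᵢ)
    (hdense : (⨆ n, H n).topologicalClosure = ⊤) (hS : ∀ i n, ∀ f ∈ H n, S i f ∈ H (n + 1))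
    (hsurj : ∀ f ∈ (H 0)ᗮ, f ∈ ⨆ i, LinearMap.range (S i : E →ₗ[𝕜] E)) :
    (⨆ i, LinearMap.range (S i : E →ₗ[𝕜] E)).topologicalClosure = (H 0)ᗮ := by
  refine le_antisymm (Submodule.topologicalClosure_minimal _ (iSup_le fun i => ?_)
    (H 0).isClosed_orthogonal) fun f hf => Submodule.le_topologicalClosure _ (hsurj f hf)
  rintro _ ⟨u, rfl⟩
  rw [← Submodule.starProjection_apply_eq_zero_iff]
  exact DFunLike.congr_fun (starProjection_zero_comp_of_mapsTo hortho hdense (hS i)) u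

theorem ContinuousLinearMap.eq_one_sub_starProjection_zero
    (hortho : OrthogonalFamily 𝕜 (fun n => H n) fun n => (H n).subtypeₗᵢ)
    (hdense : (⨆ n, H n).topologicalClosure = ⊤) {A : E →L[𝕜] E}
    (h0 : ∀ g ∈ H 0, A g = 0) (hsucc : ∀ n, ∀ g ∈ H (n + 1), A g = g) :
    A = 1 - (H 0).starProjection := by
  refine ContinuousLinearMap.ext_of_dense_iSup hdense fun n g hg => ?_
  rcases n with _ | n
  · simp [h0 g hg, Submodule.starProjection_eq_self_iff.mpr hg]
  · simp [hsucc n g hg, hortho.starProjection_eq_zero_of_mem n.succ_ne_zero.symm hg]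

theorem ContinuousLinearMap.comp_eq_one_sub_starProjection_zero
    (hortho : OrthogonalFamily 𝕜 (fun n => H n) fun n => (H n).subtypeₗᵢ)
    (hdense : (⨆ n, H n).topologicalClosure = ⊤) {A B : E →L[𝕜] E} {r : ℕ → 𝕜}
    (hr : ∀ n, r n ≠ 0) (hA0 : ∀ g ∈ H 0, A g = 0) (hB0 : ∀ g ∈ H 0, B g = g)
    (hA : ∀ n, ∀ g ∈ H (n + 1), A g = r n • g) (hB : ∀ n, ∀ g ∈ H (n + 1), B g = (r n)⁻¹ • g) :
    A ∘L B = 1 - (H 0).starProjection ∧ B ∘L A = 1 - (H 0).starProjection := by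
  constructor <;> refine eq_one_sub_starProjection_zero hortho hdense
    (fun g hg => by simp [hA0, hB0, hg]) fun n g hg => ?_
  · simp [hB n g hg, hA n g hg, smul_smul, hr n]
  · simp [hA n g hg, hB n g hg, smul_smul, hr n]

end Shift

section Kernel

variable {d : ℕ} {𝒟 HK : Type*} [NormedAddCommGroup 𝒟] [InnerProductSpace ℂ 𝒟]
  [NormedAddCommGroup HK] [InnerProductSpace ℂ HK]
  {ev : EuclideanSpace ℂ (Fin d) → HK →L[ℂ] 𝒟} {Hn : ℕ → Submodule ℂ HK}

theorem isClosed_of_homogeneous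
    (hHn : ∀ (n : ℕ) (f : HK), f ∈ Hn n ↔
      ∀ (c : ℂ) (z), ‖z‖ < 1 → ‖c‖ ≤ 1 → ev (c • z) f = c ^ n • ev z f) (n : ℕ) :
    IsClosed (Hn n : Set HK) := by
  have : (Hn n : Set HK) = ⋂ (c : ℂ) (z) (_ : ‖z‖ < 1) (_ : ‖c‖ ≤ 1),
      {f | ev (c • z) f = c ^ n • ev z f} := by
    ext f
    simp [hHn]
  rw [this]
  exact isClosed_iInter fun c => isClosed_iInter fun z => isClosed_iInter fun _ =>
    isClosed_iInter fun _ => isClosed_eq (ev (c • z)).continuous ((ev z).continuous.const_smul _)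

theorem mem_succ_of_ev_apply_eq_smul
    (hHn : ∀ (n : ℕ) (f : HK), f ∈ Hn n ↔
      ∀ (c : ℂ) (z), ‖z‖ < 1 → ‖c‖ ≤ 1 → ev (c • z) f = c ^ n • ev z f)
    {i : Fin d} {S : HK →L[ℂ] HK} (hS : ∀ z, ‖z‖ < 1 → ∀ f, ev z (S f) = z i • ev z f)
    {n : ℕ} {f : HK} (hf : f ∈ Hn n) : S f ∈ Hn (n + 1) := by
  refine (hHn _ _).mpr fun c z hz hc => ?_
  rw [hS _ (norm_smul_lt_one hc hz), hS z hz, (hHn n f).mp hf c z hz hc, PiLp.smul_apply,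
    smul_smul, smul_smul, pow_succ, smul_eq_mul]
  ring_nf

theorem ev_sum_conj_smul_apply {Mz : Fin d → HK →L[ℂ] HK}
    (hMz : ∀ (i) (z), ‖z‖ < 1 → ∀ f, ev z (Mz i f) = z i • ev z f)
    {z : EuclideanSpace ℂ (Fin d)} (hz : ‖z‖ < 1) (w : EuclideanSpace ℂ (Fin d)) (u : HK) :
    ev z (∑ i, starRingEnd ℂ (w i) • Mz i u) = ⟪w, z⟫_ℂ • ev z u := by
  simp [map_sum, hMz _ z hz, smul_smul, PiLp.inner_apply, Finset.sum_smul, mul_comm]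

variable [CompleteSpace HK] [CompleteSpace 𝒟]

theorem adjoint_apply_adjoint_ev {i : Fin d} {S : HK →L[ℂ] HK}
    (hS : ∀ z, ‖z‖ < 1 → ∀ f, ev z (S f) = z i • ev z f)
    {w : EuclideanSpace ℂ (Fin d)} (hw : ‖w‖ < 1) (x : 𝒟) :
    S.adjoint ((ev w).adjoint x) = starRingEnd ℂ (w i) • (ev w).adjoint x := by
  refine ext_inner_right ℂ fun u => ?_
  rw [ContinuousLinearMap.adjoint_inner_left, ContinuousLinearMap.adjoint_inner_left, hS w hw,
    inner_smul_right, inner_smul_left, Complex.conj_conj, ContinuousLinearMap.adjoint_inner_left]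

theorem dense_span_range_adjoint_ev (hsep : ∀ f : HK, (∀ z, ‖z‖ < 1 → ev z f = 0) → f = 0) :
    Dense (Submodule.span ℂ (⋃ (w) (_ : ‖w‖ < 1), Set.range (ev w).adjoint) : Set HK) := by
  rw [Submodule.dense_iff_topologicalClosure_eq_top, Submodule.topologicalClosure_eq_top_iff,
    Submodule.eq_bot_iff]
  refine fun h hh => hsep h fun w hw => ext_inner_left ℂ fun x => ?_
  rw [← ContinuousLinearMap.adjoint_inner_left, inner_zero_right]
  exact Submodule.inner_right_of_mem_orthogonal
    (Submodule.subset_span (Set.mem_iUnion₂.mpr ⟨w, hw, Set.mem_range_self x⟩)) hh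

theorem ev_starProjection_adjoint_ev [∀ n, CompleteSpace (Hn n)] {a : ℕ → ℝ}
    (hkernel : ∀ z w : EuclideanSpace ℂ (Fin d), ‖z‖ < 1 → ‖w‖ < 1 → ∀ x : 𝒟,
      HasSum (fun n => ((a n : ℂ) * ⟪w, z⟫_ℂ ^ n) • x) (ev z ((ev w).adjoint x)))
    (hhom : ∀ n, ∀ f ∈ Hn n, ∀ (c : ℂ) (z), ‖z‖ < 1 → ‖c‖ ≤ 1 → ev (c • z) f = c ^ n • ev z f)
    (hortho : OrthogonalFamily ℂ (fun n => Hn n) fun n => (Hn n).subtypeₗᵢ)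
    (hdense : (⨆ n, Hn n).topologicalClosure = ⊤)
    {z w : EuclideanSpace ℂ (Fin d)} (hz : ‖z‖ < 1) (hw : ‖w‖ < 1) (x : 𝒟) (n : ℕ) :
    ev z ((Hn n).starProjection ((ev w).adjoint x)) = ((a n : ℂ) * ⟪w, z⟫_ℂ ^ n) • x := by
  suffices h : (fun n => ev z ((Hn n).starProjection ((ev w).adjoint x))) =
      fun n => ((a n : ℂ) * ⟪w, z⟫_ℂ ^ n) • x from congrFun h n
  refine eq_of_hasSum_pow_smul (s := fun c : ℂ => ev (c • z) ((ev w).adjoint x)) ?_ ?_ <;>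
    filter_upwards [Metric.ball_mem_nhds (0 : ℂ) one_pos] with c hc <;>
    rw [mem_ball_zero_iff] at hc
  · have h := (hortho.hasSum_starProjection hdense ((ev w).adjoint x)).mapL (ev (c • z))
    simpa only [ContinuousLinearMap.coe_coe,
      hhom _ _ (Submodule.starProjection_apply_mem _ _) c z hz hc.le] using h
  · convert hkernel (c • z) w (norm_smul_lt_one hc.le hz) hw x using 2 with k
    rw [inner_smul_right, mul_pow, smul_smul]
    ring_nf

theorem sum_apply_adjoint_apply_of_mem_succ [∀ n, CompleteSpace (Hn n)] {a : ℕ → ℝ}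
    (hsep : ∀ f : HK, (∀ z, ‖z‖ < 1 → ev z f = 0) → f = 0)
    (hkernel : ∀ z w : EuclideanSpace ℂ (Fin d), ‖z‖ < 1 → ‖w‖ < 1 → ∀ x : 𝒟,
      HasSum (fun n => ((a n : ℂ) * ⟪w, z⟫_ℂ ^ n) • x) (ev z ((ev w).adjoint x)))
    {Mz : Fin d → HK →L[ℂ] HK} (hMz : ∀ (i) (z), ‖z‖ < 1 → ∀ f, ev z (Mz i f) = z i • ev z f)
    (hshift : ∀ i n, ∀ f ∈ Hn n, Mz i f ∈ Hn (n + 1))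
    (hhom : ∀ n, ∀ f ∈ Hn n, ∀ (c : ℂ) (z), ‖z‖ < 1 → ‖c‖ ≤ 1 → ev (c • z) f = c ^ n • ev z f)
    (hortho : OrthogonalFamily ℂ (fun n => Hn n) fun n => (Hn n).subtypeₗᵢ)
    (hdense : (⨆ n, Hn n).topologicalClosure = ⊤)
    {n : ℕ} (ha : a (n + 1) ≠ 0) {g : HK} (hg : g ∈ Hn (n + 1)) :
    ∑ i, Mz i ((Mz i).adjoint g) = ((a n / a (n + 1) : ℝ) : ℂ) • g := by
  set P := (Hn (n + 1)).starProjection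
  suffices h : (∑ i, Mz i ∘L (Mz i).adjoint) ∘L P = ((a n / a (n + 1) : ℝ) : ℂ) • P by
    simpa [P, Submodule.starProjection_eq_self_iff.mpr hg] using DFunLike.congr_fun h g
  refine ContinuousLinearMap.ext_on (dense_span_range_adjoint_ev hsep) fun k hk => ?_
  obtain ⟨w, hw, x, rfl⟩ : ∃ w, ‖w‖ < 1 ∧ ∃ x, (ev w).adjoint x = k := by simpa using hk
  have hadj : ∀ i, (Mz i).adjoint (P ((ev w).adjoint x)) =
      starRingEnd ℂ (w i) • (Hn n).starProjection ((ev w).adjoint x) := fun i => by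
    rw [← ContinuousLinearMap.comp_apply,
      adjoint_comp_starProjection_succ hortho hdense (hshift i) n,
      ContinuousLinearMap.comp_apply, adjoint_apply_adjoint_ev (hMz i) hw, map_smul]
  simp only [ContinuousLinearMap.comp_apply, sum_apply, smul_apply, hadj, map_smul]
  refine sub_eq_zero.mp (hsep _ fun z hz => ?_)
  rw [map_sub, ev_sum_conj_smul_apply hMz hz, map_smul,
    ev_starProjection_adjoint_ev hkernel hhom hortho hdense hz hw,
    ev_starProjection_adjoint_ev hkernel hhom hortho hdense hz hw, smul_smul, smul_smul,
    sub_eq_zero]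
  have ha' : (a (n + 1) : ℂ) ≠ 0 := by exact_mod_cast ha
  congr 1
  push_cast
  field_simp
  ring

end Kernel

theorem stmt6_general {d : ℕ} {𝒟 HK : Type*}
    [NormedAddCommGroup 𝒟] [InnerProductSpace ℂ 𝒟] [CompleteSpace 𝒟]
    [NormedAddCommGroup HK] [InnerProductSpace ℂ HK] [CompleteSpace HK]
    (a : ℕ → ℝ) (hapos : ∀ n, 0 < a n)
    (ev : EuclideanSpace ℂ (Fin d) → (HK →L[ℂ] 𝒟))
    (hsep : ∀ f : HK, (∀ z, ‖z‖ < 1 → ev z f = 0) → f = 0)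
    (hkernel : ∀ z w : EuclideanSpace ℂ (Fin d), ‖z‖ < 1 → ‖w‖ < 1 → ∀ x : 𝒟,
      HasSum (fun n => ((a n : ℂ) * ⟪w, z⟫_ℂ ^ n) • x) (ev z ((ev w).adjoint x)))
    (Mz : Fin d → HK →L[ℂ] HK)
    (hMz : ∀ (i) (z), ‖z‖ < 1 → ∀ f, ev z (Mz i f) = z i • ev z f)
    (Hn : ℕ → Submodule ℂ HK)
    (hHn : ∀ (n : ℕ) (f : HK), f ∈ Hn n ↔
      ∀ (c : ℂ) (z), ‖z‖ < 1 → ‖c‖ ≤ 1 → ev (c • z) f = c ^ n • ev z f)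
    (horthHn : ∀ p q, p ≠ q → ∀ f ∈ Hn p, ∀ g ∈ Hn q, ⟪f, g⟫_ℂ = 0)
    (hHndense : (⨆ n, Hn n).topologicalClosure = ⊤)
    (δ Δ : HK →L[ℂ] HK)
    (hδ0 : ∀ f ∈ Hn 0, δ f = f)
    (hδ : ∀ n, 1 ≤ n → ∀ f ∈ Hn n, δ f = ((a n / a (n - 1) : ℝ) : ℂ) • f)
    (hΔ : ∀ (n) (f), f ∈ Hn n → Δ f = ((a (n + 1) / a n : ℝ) : ℂ) • f) :
    (∀ f : HK,
      -- (M_z^* M_z)(M_z^* δ f) = M_z^* f, i.e. (M_z^*M_z)⁻¹(M_z^* f) = M_z^* δ f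
      (∀ i, (Mz i).adjoint (∑ j, Mz j ((Mz j).adjoint (δ f))) = (Mz i).adjoint f) ∧
      -- M_z^* δ f = (⊕Δ) M_z^* f componentwise
      (∀ i, (Mz i).adjoint (δ f) = Δ ((Mz i).adjoint f)) ∧
      -- δ(M_z M_z^*) is the orthogonal projection onto (H₀(𝒟))^⊥ = H_K(𝒟) ⊖ 𝒟
      δ (∑ i, Mz i ((Mz i).adjoint f)) ∈ (Hn 0)ᗮ ∧
      f - δ (∑ i, Mz i ((Mz i).adjoint f)) ∈ Hn 0) ∧
    -- the closure of Im M_z is the orthogonal complement of the constants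
    (⨆ i, LinearMap.range (Mz i : HK →ₗ[ℂ] HK)).topologicalClosure = (Hn 0)ᗮ := by
  have : ∀ n, CompleteSpace (Hn n) := fun n => (isClosed_of_homogeneous hHn n).completeSpace_coe
  have hortho : OrthogonalFamily ℂ (fun n => Hn n) fun n => (Hn n).subtypeₗᵢ :=
    fun p q hpq f g => horthHn p q hpq f f.2 g g.2
  have hshift : ∀ i n, ∀ f ∈ Hn n, Mz i f ∈ Hn (n + 1) :=
    fun i n f hf => mem_succ_of_ev_apply_eq_smul hHn (hMz i) hf
  have hadj0 : ∀ i, ∀ g ∈ Hn 0, (Mz i).adjoint g = 0 :=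
    fun i g hg => adjoint_apply_eq_zero_of_mem_zero hortho hHndense (hshift i) hg
  have hδsucc : ∀ n, ∀ g ∈ Hn (n + 1), δ g = ((a (n + 1) / a n : ℝ) : ℂ) • g := fun n g hg => by
    simpa using hδ (n + 1) n.succ_pos g hg
  have hT : ∀ n, ∀ g ∈ Hn (n + 1),
      ∑ i, Mz i ((Mz i).adjoint g) = ((a n / a (n + 1) : ℝ) : ℂ) • g := fun n g hg =>
    sum_apply_adjoint_apply_of_mem_succ hsep hkernel hMz hshift (fun n f hf => (hHn n f).mp hf)
      hortho hHndense (hapos (n + 1)).ne' hg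
  obtain ⟨hTδ, hδT⟩ := ContinuousLinearMap.comp_eq_one_sub_starProjection_zero hortho hHndense
    (A := ∑ i, Mz i ∘L (Mz i).adjoint) (B := δ) (r := fun n => ((a n / a (n + 1) : ℝ) : ℂ))
    (fun n => by simp [(hapos n).ne', (hapos (n + 1)).ne'])
    (fun g hg => by simp [hadj0 _ g hg]) hδ0 (fun n g hg => by simpa using hT n g hg)
    (fun n g hg => by simp [hδsucc n g hg])
  replace hTδ := DFunLike.congr_fun hTδ
  replace hδT := DFunLike.congr_fun hδT
  simp only [ContinuousLinearMap.comp_apply, sum_apply, sub_apply,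
    one_apply_eq_self] at hTδ hδT
  have hadjδ : ∀ i, (Mz i).adjoint ∘L δ = Δ ∘L (Mz i).adjoint := fun i =>
    adjoint_comp_eq_comp_adjoint_of_diagonal hortho hHndense (hshift i)
      (fun g hg => by rwa [hδ0 g hg]) hδsucc hΔ
  refine ⟨fun f => ⟨fun i => ?_, fun i => DFunLike.congr_fun (hadjδ i) f, ?_, ?_⟩,
    topologicalClosure_iSup_range_eq_orthogonal_zero hortho hHndense hshift fun f hf => ?_⟩
  · rw [hTδ, map_sub, hadj0 i _ (Submodule.starProjection_apply_mem _ f), sub_zero]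
  · rw [hδT]
    exact Submodule.sub_starProjection_mem_orthogonal f
  · rw [hδT, sub_sub_cancel]
    exact Submodule.starProjection_apply_mem _ f
  · rw [← sub_zero f, ← (Submodule.starProjection_apply_eq_zero_iff _).mpr hf, ← hTδ]
    exact Submodule.sum_mem _ fun i _ => Submodule.mem_iSup_of_mem i ⟨_, rfl⟩

/-- `(M_z^* M_z)^{-1}(M_z^* f) = M_z^* δ f = (⊕Δ) M_z^* f` for every
`f ∈ H_K(𝒟)`, and the orthogonal projection onto `Im M_z` equals `δ(M_z M_z^*)`, the
projection onto the orthogonal complement of the constants `𝒟 = H₀(𝒟)`. -/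
theorem stmt6 {d : ℕ} {𝒟 HK : Type*}
    [NormedAddCommGroup 𝒟] [InnerProductSpace ℂ 𝒟] [CompleteSpace 𝒟]
    [NormedAddCommGroup HK] [InnerProductSpace ℂ HK] [CompleteSpace HK]
    (a : ℕ → ℝ) (ha0 : a 0 = 1) (hapos : ∀ n, 0 < a n)
    (m M : ℝ) (hm : 0 < m) (hbd : ∀ n, m ≤ a n / a (n + 1) ∧ a n / a (n + 1) ≤ M)
    (ev : EuclideanSpace ℂ (Fin d) → (HK →L[ℂ] 𝒟))
    (hsep : ∀ f : HK, (∀ z, ‖z‖ < 1 → ev z f = 0) → f = 0)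
    (hkernel : ∀ z w : EuclideanSpace ℂ (Fin d), ‖z‖ < 1 → ‖w‖ < 1 → ∀ x : 𝒟,
      HasSum (fun n => ((a n : ℂ) * ⟪w, z⟫_ℂ ^ n) • x) (ev z ((ev w).adjoint x)))
    (Mz : Fin d → HK →L[ℂ] HK)
    (hMz : ∀ (i) (z), ‖z‖ < 1 → ∀ f, ev z (Mz i f) = z i • ev z f)
    (Hn : ℕ → Submodule ℂ HK)
    (hHn : ∀ (n : ℕ) (f : HK), f ∈ Hn n ↔
      ∀ (c : ℂ) (z), ‖z‖ < 1 → ‖c‖ ≤ 1 → ev (c • z) f = c ^ n • ev z f)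
    (horthHn : ∀ p q, p ≠ q → ∀ f ∈ Hn p, ∀ g ∈ Hn q, ⟪f, g⟫_ℂ = 0)
    (hHndense : (⨆ n, Hn n).topologicalClosure = ⊤)
    (δ Δ : HK →L[ℂ] HK)
    (hδ0 : ∀ f ∈ Hn 0, δ f = f)
    (hδ : ∀ n, 1 ≤ n → ∀ f ∈ Hn n, δ f = ((a n / a (n - 1) : ℝ) : ℂ) • f)
    (hΔ : ∀ (n) (f), f ∈ Hn n → Δ f = ((a (n + 1) / a n : ℝ) : ℂ) • f) :
    (∀ f : HK,
      -- (M_z^* M_z)(M_z^* δ f) = M_z^* f, i.e. (M_z^*M_z)⁻¹(M_z^* f) = M_z^* δ f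
      (∀ i, (Mz i).adjoint (∑ j, Mz j ((Mz j).adjoint (δ f))) = (Mz i).adjoint f) ∧
      -- M_z^* δ f = (⊕Δ) M_z^* f componentwise
      (∀ i, (Mz i).adjoint (δ f) = Δ ((Mz i).adjoint f)) ∧
      -- δ(M_z M_z^*) is the orthogonal projection onto (H₀(𝒟))^⊥ = H_K(𝒟) ⊖ 𝒟
      δ (∑ i, Mz i ((Mz i).adjoint f)) ∈ (Hn 0)ᗮ ∧
      f - δ (∑ i, Mz i ((Mz i).adjoint f)) ∈ Hn 0) ∧
    -- the closure of Im M_z is the orthogonal complement of the constants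
    (⨆ i, LinearMap.range (Mz i : HK →ₗ[ℂ] HK)).topologicalClosure = (Hn 0)ᗮ :=
  stmt6_general a hapos ev hsep hkernel Mz hMz Hn hHn horthHn hHndense δ Δ hδ0 hδ hΔ
end

section
/- Let T ∈ L(H)^d be a pure K-contraction with canonical dilation j : H → H_K(𝒟) and let M = H_K(𝒟) ⊖ Im j. Then M is invariant under each M_{z_i}, and a function f ∈ H_K(𝒟) belongs to the wandering subspace W(M) = M ⊖ Σ_i M_{z_i}M if and only if j^*f = 0 and (1 − jj^*)M_{z_i}^* f = 0 for i = 1,...,d. -/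
open Filter Topology
open scoped InnerProductSpace

/-!
Since `j` intertwines `Tᵢ*` with `M_{zᵢ}*`, its range is `M_{zᵢ}*`-invariant, so `M = (Im j)ᗮ` is
`M_{zᵢ}`-invariant. For the wandering subspace, `f ⊥ M_{zᵢ}M` means `M_{zᵢ}* f ∈ Mᗮ = closure (Im j)`;
as `j` is an isometry, `jj*` is the orthogonal projection onto the closed subspace `Im j`, so this is
`(1 - jj*) M_{zᵢ}* f = 0`, while `f ∈ M = ker j*` is `j* f = 0`.
-/

theorem LinearMap.range_mem_invtSubmodule_of_comp_eq {R M N : Type*} [Semiring R]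
    [AddCommMonoid M] [Module R M] [AddCommMonoid N] [Module R N] {j : M →ₗ[R] N}
    {S : Module.End R M} {B : Module.End R N} (h : j ∘ₗ S = B ∘ₗ j) :
    LinearMap.range j ∈ Module.End.invtSubmodule B := by
  rintro _ ⟨x, rfl⟩
  exact ⟨S x, LinearMap.congr_fun h x⟩

namespace ContinuousLinearMap

variable {𝕜 E F : Type*} [RCLike 𝕜]
  [NormedAddCommGroup E] [InnerProductSpace 𝕜 E] [CompleteSpace E]
  [NormedAddCommGroup F] [InnerProductSpace 𝕜 F] [CompleteSpace F]

theorem orthogonal_map_eq_comap_adjoint (A : E →L[𝕜] F) (V : Submodule 𝕜 E) :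
    (V.map (A : E →ₗ[𝕜] F))ᗮ = Vᗮ.comap (adjoint A : F →ₗ[𝕜] E) := by
  ext f
  simp [Submodule.mem_orthogonal, ← adjoint_inner_left]

theorem range_eq_ker_one_sub_comp_adjoint {j : E →L[𝕜] F} (hj : adjoint j ∘L j = 1) :
    LinearMap.range (j : E →ₗ[𝕜] F) =
      LinearMap.ker ((1 - j ∘L adjoint j : F →L[𝕜] F) : F →ₗ[𝕜] F) := by
  ext x
  constructor
  · rintro ⟨y, rfl⟩
    rw [LinearMap.mem_ker, coe_coe, coe_coe, sub_apply, one_apply_eq_self, comp_apply,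
      ← comp_apply (adjoint j) j, hj, one_apply_eq_self, sub_self]
  · intro hx
    exact ⟨adjoint j x, (sub_eq_zero.1 hx).symm⟩

theorem orthogonal_orthogonal_range_of_adjoint_comp_self {j : E →L[𝕜] F}
    (hj : adjoint j ∘L j = 1) :
    (LinearMap.range (j : E →ₗ[𝕜] F))ᗮᗮ =
      LinearMap.ker ((1 - j ∘L adjoint j : F →L[𝕜] F) : F →ₗ[𝕜] F) := by
  rw [Submodule.orthogonal_orthogonal_eq_closure, range_eq_ker_one_sub_comp_adjoint hj]
  exact (isClosed_ker _).submodule_topologicalClosure_eq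

end ContinuousLinearMap

open ContinuousLinearMap in
theorem stmt11_general {d : ℕ} {HK H : Type*}
    [NormedAddCommGroup HK] [InnerProductSpace ℂ HK] [CompleteSpace HK]
    [NormedAddCommGroup H] [InnerProductSpace ℂ H] [CompleteSpace H]
    (Mz : Fin d → HK →L[ℂ] HK)
    -- T is a pure K-contraction
    (T : Fin d → H →L[ℂ] H)
    -- the canonical K-dilation j
    (j : H →L[ℂ] HK) (hjiso : ∀ h, ‖j h‖ = ‖h‖)
    (hjint : ∀ i, j ∘L (T i).adjoint = (Mz i).adjoint ∘L j) :
    -- M = (Im j)^⊥ is invariant under each M_{zᵢ}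
    (∀ i, Submodule.map (Mz i : HK →ₗ[ℂ] HK) (LinearMap.range (j : H →ₗ[ℂ] HK))ᗮ ≤ (LinearMap.range (j : H →ₗ[ℂ] HK))ᗮ) ∧
    -- membership in the wandering subspace W(M) = M ⊖ Σᵢ M_{zᵢ}M
    ∀ f : HK,
      (f ∈ (LinearMap.range (j : H →ₗ[ℂ] HK))ᗮ ⊓
          (⨆ i, Submodule.map (Mz i : HK →ₗ[ℂ] HK) (LinearMap.range (j : H →ₗ[ℂ] HK))ᗮ)ᗮ) ↔
        (j.adjoint f = 0 ∧
          ∀ i, (Mz i).adjoint f - j (j.adjoint ((Mz i).adjoint f)) = 0) := by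
  have hj : adjoint j ∘L j = 1 := (norm_map_iff_adjoint_comp_self j).1 hjiso
  refine ⟨fun i => ?_, fun f => ?_⟩
  · have hrange := LinearMap.range_mem_invtSubmodule_of_comp_eq (congrArg toLinearMap (hjint i))
    exact (Module.End.mem_invtSubmodule_iff_map_le _).1 (orthogonal_mem_invtSubmodule hrange)
  · rw [Submodule.mem_inf, ← Submodule.iInf_orthogonal, Submodule.mem_iInf]
    simp_rw [orthogonal_map_eq_comap_adjoint, orthogonal_orthogonal_range_of_adjoint_comp_self hj]
    rw [orthogonal_range]
    simp only [Submodule.mem_comap, LinearMap.mem_ker, coe_coe, sub_apply, one_apply_eq_self,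
      comp_apply]

/-- for a pure K-contraction `T` with canonical dilation `j` and
`M = H_K(𝒟) ⊖ Im j`, the space `M` is `M_z`-invariant and `f` lies in the wandering
subspace `W(M) = M ⊖ Σᵢ M_{zᵢ}M` iff `j^*f = 0` and `(1 − jj^*)M_{zᵢ}^*f = 0` for all `i`. -/
theorem stmt11 {d : ℕ} {𝒟 HK H : Type*}
    [NormedAddCommGroup 𝒟] [InnerProductSpace ℂ 𝒟] [CompleteSpace 𝒟]
    [NormedAddCommGroup HK] [InnerProductSpace ℂ HK] [CompleteSpace HK]
    [NormedAddCommGroup H] [InnerProductSpace ℂ H] [CompleteSpace H]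
    (a : ℕ → ℝ) (ha0 : a 0 = 1) (hapos : ∀ n, 0 < a n)
    (m M' : ℝ) (hm : 0 < m) (hbd : ∀ n, m ≤ a n / a (n + 1) ∧ a n / a (n + 1) ≤ M')
    (ev : EuclideanSpace ℂ (Fin d) → (HK →L[ℂ] 𝒟))
    (hsep : ∀ f : HK, (∀ z, ‖z‖ < 1 → ev z f = 0) → f = 0)
    (hkernel : ∀ z w : EuclideanSpace ℂ (Fin d), ‖z‖ < 1 → ‖w‖ < 1 → ∀ x : 𝒟,
      HasSum (fun n => ((a n : ℂ) * ⟪w, z⟫_ℂ ^ n) • x) (ev z ((ev w).adjoint x)))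
    (Mz : Fin d → HK →L[ℂ] HK)
    (hMz : ∀ (i) (z), ‖z‖ < 1 → ∀ f, ev z (Mz i f) = z i • ev z f)
    -- T is a pure K-contraction
    (T : Fin d → H →L[ℂ] H) (hT : ∀ i j, Commute (T i) (T j))
    (c : ℕ → ℝ) (hc0 : c 0 = 1)
    (hcauchy : ∀ n, 1 ≤ n → ∑ j ∈ Finset.range (n + 1), a j * c (n - j) = 0)
    (σit : (H →L[ℂ] H) → ℕ → (H →L[ℂ] H))
    (hσ0 : ∀ X, σit X 0 = X)
    (hσs : ∀ X n, σit X (n + 1) = ∑ i, T i ∘L σit X n ∘L (T i).adjoint)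
    (D0 : H →L[ℂ] H) (hD0pos : D0.IsPositive)
    (hD0 : ∀ x : H, HasSum (fun n => ((c n : ℝ) : ℂ) • σit 1 n x) (D0 x))
    (hpure : ∀ x : H, Tendsto (fun N => ∑ n ∈ Finset.range N, ((a n : ℝ) : ℂ) • σit D0 n x)
      atTop (𝓝 x))
    (C : H →L[ℂ] 𝒟) (hCC : C.adjoint ∘L C = D0) (hCdense : DenseRange C)
    -- the canonical K-dilation j
    (j : H →L[ℂ] HK) (hjiso : ∀ h, ‖j h‖ = ‖h‖)
    (hj : ∀ (h : H) (z), ‖z‖ < 1 →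
      HasSum (fun n => ((a n : ℝ) : ℂ) • C (((∑ i, z i • (T i).adjoint) ^ n) h))
        (ev z (j h)))
    (hjint : ∀ i, j ∘L (T i).adjoint = (Mz i).adjoint ∘L j) :
    -- M = (Im j)^⊥ is invariant under each M_{zᵢ}
    (∀ i, Submodule.map (Mz i : HK →ₗ[ℂ] HK) (LinearMap.range (j : H →ₗ[ℂ] HK))ᗮ ≤ (LinearMap.range (j : H →ₗ[ℂ] HK))ᗮ) ∧
    -- membership in the wandering subspace W(M) = M ⊖ Σᵢ M_{zᵢ}M
    ∀ f : HK,
      (f ∈ (LinearMap.range (j : H →ₗ[ℂ] HK))ᗮ ⊓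
          (⨆ i, Submodule.map (Mz i : HK →ₗ[ℂ] HK) (LinearMap.range (j : H →ₗ[ℂ] HK))ᗮ)ᗮ) ↔
        (j.adjoint f = 0 ∧
          ∀ i, (Mz i).adjoint f - j (j.adjoint ((Mz i).adjoint f)) = 0) :=
  stmt11_general Mz T j hjiso hjint
end

section
/- If M_z ∈ L(H_K)^d is a K-contraction, then (1/K)(M_z) = SOT-Σ_{n=0}^∞ c_n σ_{M_z}^n(1_{H_K}) equals the orthogonal projection P_ℂ of H_K onto the one-dimensional subspace of constant functions; moreover for α, β ∈ ℕ^d, the operator M_z^α P_ℂ M_z^{*β} is the rank-one operator z^α ⊗ z^β sending K(·,w) to \bar{w}^β z^α. -/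
/-! Every kernel function `k_w = (ev w)† 1` is a joint eigenvector of the adjoints `M_{z_i}*`
with eigenvalues `conj (w i)`, so `(σⁿ(1) k_w)(z) = ⟨z, w⟩ⁿ K(z, w)` and
`((1/K)(M_z) k_w)(z) = (Σ cₙ ⟨z, w⟩ⁿ) (Σ aₙ ⟨z, w⟩ⁿ) = 1` by the Cauchy product.
Since the kernel functions span a dense subspace and `⟨1, k_w⟩ = 1`, an operator sending all of
them to `1` is `f ↦ ⟨1, f⟩ 1`. The rank-one formula follows by applying `M_z^{*β}` to `k_w`
first. -/

open Filter Topology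
open scoped InnerProductSpace ComplexConjugate

section Cauchy

open Finset

theorem tsum_mul_tsum_eq_one_of_sum_antidiagonal {R : Type*} [NormedRing R] [CompleteSpace R]
    {f g : ℕ → R} (hf : Summable fun n => ‖f n‖) (hg : Summable fun n => ‖g n‖)
    (h : ∀ n, ∑ kl ∈ antidiagonal n, f kl.1 * g kl.2 = if n = 0 then 1 else 0) :
    (∑' n, f n) * ∑' n, g n = 1 := by
  rw [tsum_mul_tsum_eq_tsum_sum_antidiagonal_of_summable_norm hf hg, tsum_congr h, tsum_ite_eq]

theorem sum_antidiagonal_mul_pow_eq_ite {a c : ℕ → ℝ} (ha0 : a 0 = 1) (hc0 : c 0 = 1)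
    (hcauchy : ∀ n, 1 ≤ n → ∑ j ∈ range (n + 1), a j * c (n - j) = 0) (t : ℂ) (n : ℕ) :
    ∑ kl ∈ antidiagonal n, ((a kl.1 : ℂ) * t ^ kl.1) * ((c kl.2 : ℂ) * t ^ kl.2) =
      if n = 0 then 1 else 0 := by
  have hpow : ∀ kl ∈ antidiagonal n,
      ((a kl.1 : ℂ) * t ^ kl.1) * ((c kl.2 : ℂ) * t ^ kl.2) =
        ((a kl.1 * c kl.2 : ℝ) : ℂ) * t ^ n := by
    intro kl hkl
    rw [Finset.HasAntidiagonal.mem_antidiagonal] at hkl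
    rw [← hkl, pow_add]
    push_cast
    ring
  rw [sum_congr rfl hpow, ← sum_mul, ← Complex.ofReal_sum,
    Nat.sum_antidiagonal_eq_sum_range_succ (fun i j => a i * c j)]
  rcases Nat.eq_zero_or_pos n with rfl | hn
  · simp [ha0, hc0]
  · simp [hcauchy n hn, hn.ne']

theorem summable_norm_mul_pow_of_norm_le {c : ℕ → ℂ} {t u : ℂ}
    (hu : Summable fun n => c n * u ^ n) (ht : ‖t‖ ≤ ‖u‖) :
    Summable fun n => ‖c n * t ^ n‖ := by
  refine (summable_norm_iff.mpr hu).of_nonneg_of_le (fun _ => norm_nonneg _) fun n => ?_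
  simp only [norm_mul, norm_pow]
  gcongr

end Cauchy

namespace ContinuousLinearMap

section Normed

variable {𝕜 E : Type*} [RCLike 𝕜] [NormedAddCommGroup E] [NormedSpace 𝕜 E]

theorem apply_noncommProd_pow {ι : Type*} {φ : E →L[𝕜] 𝕜} {T : ι → E →L[𝕜] E} {μ : ι → 𝕜}
    (hT : ∀ i f, φ (T i f) = μ i * φ f) (β : ι → ℕ) (s : Finset ι)
    (hcomm : (s : Set ι).Pairwise (Function.onFun Commute fun i => T i ^ β i)) (f : E) :
    φ (s.noncommProd (fun i => T i ^ β i) hcomm f) = (∏ i ∈ s, μ i ^ β i) * φ f := by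
  classical
  have hpow : ∀ i k g, φ ((T i ^ k) g) = μ i ^ k * φ g := by
    intro i k
    induction k with
    | zero => simp
    | succ k ih => intro g; rw [pow_succ, mul_apply_eq_comp, ih, hT, pow_succ, mul_assoc]
  induction s using Finset.induction_on generalizing f with
  | empty => simp
  | insert i s hi ih =>
    rw [Finset.noncommProd_insert_of_notMem _ _ _ _ hi, mul_apply_eq_comp, hpow, ih,
      Finset.prod_insert hi, mul_assoc]

end Normed

section Inner

variable {𝕜 E : Type*} [RCLike 𝕜] [NormedAddCommGroup E] [InnerProductSpace 𝕜 E]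
  [CompleteSpace E]

theorem inner_adjoint_one_left (φ : E →L[𝕜] 𝕜) (f : E) : ⟪φ.adjoint 1, f⟫_𝕜 = φ f := by
  rw [adjoint_inner_left, RCLike.inner_apply, map_one, mul_one]

theorem apply_adjoint_one_ne_zero {φ : E →L[𝕜] 𝕜} (hφ : φ ≠ 0) : φ (φ.adjoint 1) ≠ 0 := by
  rw [← inner_adjoint_one_left, inner_self_ne_zero]
  intro h
  exact hφ (ext fun f => by rw [← inner_adjoint_one_left, h, inner_zero_left, zero_apply])

theorem adjoint_apply_adjoint_one_of_apply_eq_mul {φ : E →L[𝕜] 𝕜} {T : E →L[𝕜] E} {μ : 𝕜}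
    (h : ∀ f, φ (T f) = μ * φ f) : T.adjoint (φ.adjoint 1) = conj μ • φ.adjoint 1 :=
  ext_inner_right 𝕜 fun f => by
    rw [adjoint_inner_left, inner_adjoint_one_left, h, inner_smul_left, inner_adjoint_one_left,
      RCLike.conj_conj]

theorem ext_of_eqOn_adjoint_one {X F : Type*} [NormedAddCommGroup F] [NormedSpace 𝕜 F]
    {φ : X → E →L[𝕜] 𝕜} {p : X → Prop} (hsep : ∀ f, (∀ x, p x → φ x f = 0) → f = 0)
    {A B : E →L[𝕜] F} (h : ∀ x, p x → A ((φ x).adjoint 1) = B ((φ x).adjoint 1)) : A = B := by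
  let s : Set E := (fun x => (φ x).adjoint 1) '' {x | p x}
  have hdense : Dense (Submodule.span 𝕜 s : Set E) := by
    rw [Submodule.dense_iff_topologicalClosure_eq_top, Submodule.topologicalClosure_eq_top_iff,
      Submodule.eq_bot_iff]
    refine fun f hf => hsep f fun x hx => ?_
    rw [← inner_adjoint_one_left]
    have hmem : (φ x).adjoint 1 ∈ Submodule.span 𝕜 s := Submodule.subset_span ⟨x, hx, rfl⟩
    exact Submodule.inner_right_of_mem_orthogonal hmem hf
  exact ext_on hdense (Set.forall_mem_image.2 h)

theorem eq_inner_smul_of_apply_adjoint_one {X : Type*} {φ : X → E →L[𝕜] 𝕜} {p : X → Prop}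
    (hsep : ∀ f, (∀ x, p x → φ x f = 0) → f = 0) {e : E} (he : ∀ x, p x → φ x e = 1)
    {D : E →L[𝕜] E} (hD : ∀ x, p x → D ((φ x).adjoint 1) = e) (f : E) :
    D f = ⟪e, f⟫_𝕜 • e := by
  have hrank : D = (innerSL 𝕜 e).smulRight e :=
    ext_of_eqOn_adjoint_one hsep fun x hx => by
      rw [hD x hx, smulRight_apply, innerSL_apply_apply, ← inner_conj_symm,
        inner_adjoint_one_left, he x hx, map_one, one_smul]
  rw [hrank, smulRight_apply, innerSL_apply_apply]
end Inner

end ContinuousLinearMap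

section KernelSpace

variable {d : ℕ} {HK : Type*} [NormedAddCommGroup HK] [InnerProductSpace ℂ HK] [CompleteSpace HK]
  {ev : EuclideanSpace ℂ (Fin d) → (HK →L[ℂ] ℂ)} {Mz : Fin d → HK →L[ℂ] HK}

theorem eval_sigma_iterate_adjoint_one
    (hMz : ∀ (i) (z), ‖z‖ < 1 → ∀ f, ev z (Mz i f) = z i • ev z f)
    {σ : ℕ → HK →L[ℂ] HK} (hσ : ∀ n, σ (n + 1) = ∑ i, Mz i ∘L σ n ∘L (Mz i).adjoint)
    {z w : EuclideanSpace ℂ (Fin d)} (hz : ‖z‖ < 1) (hw : ‖w‖ < 1) (n : ℕ) :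
    ev z (σ n ((ev w).adjoint 1)) = ⟪w, z⟫_ℂ ^ n * ev z (σ 0 ((ev w).adjoint 1)) := by
  induction n with
  | zero => rw [pow_zero, one_mul]
  | succ n ih =>
    have hadj : ∀ i, (Mz i).adjoint ((ev w).adjoint 1) = conj (w i) • (ev w).adjoint 1 :=
      fun i => ContinuousLinearMap.adjoint_apply_adjoint_one_of_apply_eq_mul (hMz i w hw)
    have hinner : ⟪w, z⟫_ℂ = ∑ i, conj (w i) * z i := by
      simp only [PiLp.inner_apply, RCLike.inner_apply, mul_comm]
    simp only [hσ, sum_apply, ContinuousLinearMap.comp_apply, hadj, map_smul,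
      map_sum, hMz _ z hz, ih, smul_eq_mul, hinner, pow_succ, Finset.sum_mul, Finset.mul_sum]
    exact Finset.sum_congr rfl fun i _ => by ring

theorem hasSum_eval_apply_adjoint_one
    (hMz : ∀ (i) (z), ‖z‖ < 1 → ∀ f, ev z (Mz i f) = z i • ev z f)
    {σ : ℕ → HK →L[ℂ] HK} (hσ : ∀ n, σ (n + 1) = ∑ i, Mz i ∘L σ n ∘L (Mz i).adjoint)
    (hσ0 : σ 0 = 1) {c : ℕ → ℝ} {D : HK →L[ℂ] HK}
    (hD : ∀ f : HK, HasSum (fun n => ((c n : ℝ) : ℂ) • σ n f) (D f))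
    {z w : EuclideanSpace ℂ (Fin d)} (hz : ‖z‖ < 1) (hw : ‖w‖ < 1) :
    HasSum (fun n => (c n : ℂ) * ⟪w, z⟫_ℂ ^ n * ev z ((ev w).adjoint 1))
      (ev z (D ((ev w).adjoint 1))) := by
  convert (hD ((ev w).adjoint 1)).mapL (ev z) using 2 with n
  rw [map_smul, eval_sigma_iterate_adjoint_one hMz hσ hz hw, hσ0, smul_eq_mul, mul_assoc,
    one_apply_eq_self]

theorem summable_norm_mul_inner_pow
    (hMz : ∀ (i) (z), ‖z‖ < 1 → ∀ f, ev z (Mz i f) = z i • ev z f)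
    {σ : ℕ → HK →L[ℂ] HK} (hσ : ∀ n, σ (n + 1) = ∑ i, Mz i ∘L σ n ∘L (Mz i).adjoint)
    (hσ0 : σ 0 = 1) {c : ℕ → ℝ} {D : HK →L[ℂ] HK}
    (hD : ∀ f : HK, HasSum (fun n => ((c n : ℝ) : ℂ) • σ n f) (D f))
    (hev : ∀ u, ‖u‖ < 1 → ev u ≠ 0)
    {z w : EuclideanSpace ℂ (Fin d)} (hz : ‖z‖ < 1) (hw : ‖w‖ < 1) :
    Summable fun n => ‖(c n : ℂ) * ⟪w, z⟫_ℂ ^ n‖ := by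
  -- Compare with the point `⟪u, u⟫ = ‖u‖²` for the longer of `z`, `w`: there the series
  -- converges since `K(u, u) = ‖k_u‖² ≠ 0`, and convergence in `ℂ` is absolute.
  obtain ⟨u, hu, hwz⟩ : ∃ u : EuclideanSpace ℂ (Fin d), ‖u‖ < 1 ∧ ‖w‖ * ‖z‖ ≤ ‖u‖ ^ 2 := by
    rcases le_total ‖w‖ ‖z‖ with h | h
    · exact ⟨z, hz, by nlinarith [norm_nonneg w]⟩
    · exact ⟨w, hw, by nlinarith [norm_nonneg z]⟩
  have hK := (ev u).apply_adjoint_one_ne_zero (hev u hu)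
  have hsum : Summable fun n => (c n : ℂ) * ⟪u, u⟫_ℂ ^ n :=
    ((hasSum_eval_apply_adjoint_one hMz hσ hσ0 hD hu hu).summable.mul_right
      (ev u ((ev u).adjoint 1))⁻¹).congr fun n => by field_simp
  refine summable_norm_mul_pow_of_norm_le hsum ?_
  rw [inner_self_eq_norm_sq_to_K, norm_pow, RCLike.norm_ofReal, abs_norm]
  exact (norm_inner_le_norm w z).trans hwz

theorem apply_adjoint_one_eq_of_hasSum {a c : ℕ → ℝ} (ha0 : a 0 = 1) (hc0 : c 0 = 1)
    (hcauchy : ∀ n, 1 ≤ n → ∑ j ∈ Finset.range (n + 1), a j * c (n - j) = 0)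
    (hsep : ∀ f : HK, (∀ z, ‖z‖ < 1 → ev z f = 0) → f = 0)
    (hkernel : ∀ z w : EuclideanSpace ℂ (Fin d), ‖z‖ < 1 → ‖w‖ < 1 → ∀ x : ℂ,
      HasSum (fun n => ((a n : ℂ) * ⟪w, z⟫_ℂ ^ n) • x) (ev z ((ev w).adjoint x)))
    (hMz : ∀ (i) (z), ‖z‖ < 1 → ∀ f, ev z (Mz i f) = z i • ev z f)
    {σ : ℕ → HK →L[ℂ] HK} (hσ : ∀ n, σ (n + 1) = ∑ i, Mz i ∘L σ n ∘L (Mz i).adjoint)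
    (hσ0 : σ 0 = 1) {D : HK →L[ℂ] HK}
    (hD : ∀ f : HK, HasSum (fun n => ((c n : ℝ) : ℂ) • σ n f) (D f))
    {e1 : HK} (he1 : ∀ z, ‖z‖ < 1 → ev z e1 = 1)
    {w : EuclideanSpace ℂ (Fin d)} (hw : ‖w‖ < 1) :
    D ((ev w).adjoint 1) = e1 := by
  have hev : ∀ u, ‖u‖ < 1 → ev u ≠ 0 := fun u hu h => by simpa [h] using he1 u hu
  refine sub_eq_zero.mp (hsep _ fun z hz => ?_)
  have hA : HasSum (fun n => (a n : ℂ) * ⟪w, z⟫_ℂ ^ n) (ev z ((ev w).adjoint 1)) := by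
    simpa using hkernel z w hz hw 1
  have hC := summable_norm_mul_inner_pow hMz hσ hσ0 hD hev hz hw
  have hAn : Summable fun n => ‖(a n : ℂ) * ⟪w, z⟫_ℂ ^ n‖ := summable_norm_iff.mpr hA.summable
  have hprod := tsum_mul_tsum_eq_one_of_sum_antidiagonal hAn hC
    (sum_antidiagonal_mul_pow_eq_ite ha0 hc0 hcauchy _)
  have hval := (hasSum_eval_apply_adjoint_one hMz hσ hσ0 hD hz hw).unique
    (hC.of_norm.hasSum.mul_right _)
  rw [map_sub, he1 z hz, hval, hA.tsum_eq.symm, mul_comm, hprod, sub_self]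

theorem adjoint_eval_zero_one_eq {a : ℕ → ℝ} (ha0 : a 0 = 1)
    (hsep : ∀ f : HK, (∀ z, ‖z‖ < 1 → ev z f = 0) → f = 0)
    (hkernel : ∀ z w : EuclideanSpace ℂ (Fin d), ‖z‖ < 1 → ‖w‖ < 1 → ∀ x : ℂ,
      HasSum (fun n => ((a n : ℂ) * ⟪w, z⟫_ℂ ^ n) • x) (ev z ((ev w).adjoint x)))
    {e1 : HK} (he1 : ∀ z, ‖z‖ < 1 → ev z e1 = 1) :
    (ev 0).adjoint 1 = e1 := by
  refine sub_eq_zero.mp (hsep _ fun z hz => ?_)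
  have h0 := hasSum_single
    (f := fun n => ((a n : ℂ) * ⟪(0 : EuclideanSpace ℂ (Fin d)), z⟫_ℂ ^ n) • (1 : ℂ)) 0
    fun n hn => by simp [hn]
  rw [map_sub, he1 z hz, (hkernel z 0 hz (by simp) 1).unique h0]
  simp [ha0]

end KernelSpace

theorem stmt13_general {d : ℕ} {HK : Type*}
    [NormedAddCommGroup HK] [InnerProductSpace ℂ HK] [CompleteSpace HK]
    (a : ℕ → ℝ) (ha0 : a 0 = 1)
    -- the scalar functional Hilbert space H_K with kernel K(z,w) = Σ aₙ⟨z,w⟩ⁿ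
    (ev : EuclideanSpace ℂ (Fin d) → (HK →L[ℂ] ℂ))
    (hsep : ∀ f : HK, (∀ z, ‖z‖ < 1 → ev z f = 0) → f = 0)
    (hkernel : ∀ z w : EuclideanSpace ℂ (Fin d), ‖z‖ < 1 → ‖w‖ < 1 → ∀ x : ℂ,
      HasSum (fun n => ((a n : ℂ) * ⟪w, z⟫_ℂ ^ n) • x) (ev z ((ev w).adjoint x)))
    (Mz : Fin d → HK →L[ℂ] HK)
    (hMz : ∀ (i) (z), ‖z‖ < 1 → ∀ f, ev z (Mz i f) = z i • ev z f)
    (hMzc : ∀ i j, Commute (Mz i) (Mz j))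
    -- the constant function 1
    (e1 : HK) (he1 : ∀ z, ‖z‖ < 1 → ev z e1 = 1)
    -- 1/k(z) = Σ cₙ zⁿ and M_z is a K-contraction with (1/K)(M_z) = D0 ≥ 0
    (c : ℕ → ℝ) (hc0 : c 0 = 1)
    (hcauchy : ∀ n, 1 ≤ n → ∑ j ∈ Finset.range (n + 1), a j * c (n - j) = 0)
    (σit : (HK →L[ℂ] HK) → ℕ → (HK →L[ℂ] HK))
    (hσ0 : ∀ X, σit X 0 = X)
    (hσs : ∀ X n, σit X (n + 1) = ∑ i, Mz i ∘L σit X n ∘L (Mz i).adjoint)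
    (D0 : HK →L[ℂ] HK)
    (hD0 : ∀ f : HK, HasSum (fun n => ((c n : ℝ) : ℂ) • σit 1 n f) (D0 f)) :
    -- (1/K)(M_z) is the orthogonal projection onto the constants
    (∀ f : HK, D0 f ∈ Submodule.span ℂ {e1} ∧ f - D0 f ∈ (Submodule.span ℂ {e1})ᗮ) ∧
    -- M_z^α P_ℂ M_z^{*β} is the rank-one operator z^α ⊗ z^β
    (∀ (α β : Fin d → ℕ) (w : EuclideanSpace ℂ (Fin d)), ‖w‖ < 1 →
      (Finset.univ.noncommProd (fun i => Mz i ^ α i)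
          (fun i _ j _ _ => (hMzc i j).pow_pow (α i) (α j)))
        (D0 ((Finset.univ.noncommProd (fun i => Mz i ^ β i)
          (fun i _ j _ _ => (hMzc i j).pow_pow (β i) (β j))).adjoint
            ((ev w).adjoint 1))) =
      (∏ i, (starRingEnd ℂ) (w i) ^ β i) •
        (Finset.univ.noncommProd (fun i => Mz i ^ α i)
          (fun i _ j _ _ => (hMzc i j).pow_pow (α i) (α j))) e1) := by
  have hD0kernel : ∀ w, ‖w‖ < 1 → D0 ((ev w).adjoint 1) = e1 := fun w hw =>
    apply_adjoint_one_eq_of_hasSum ha0 hc0 hcauchy hsep hkernel hMz (hσs 1) (hσ0 1) hD0 he1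
      hw
  have hD0f := ContinuousLinearMap.eq_inner_smul_of_apply_adjoint_one hsep he1 hD0kernel
  have he1e1 : ⟪e1, e1⟫_ℂ = 1 := by
    have h := (ev 0).inner_adjoint_one_left e1
    rwa [adjoint_eval_zero_one_eq ha0 hsep hkernel he1, he1 0 (by simp)] at h
  refine ⟨fun f => ⟨?_, ?_⟩, fun α β w hw => ?_⟩
  · exact Submodule.mem_span_singleton.2 ⟨_, (hD0f f).symm⟩
  · rw [Submodule.mem_orthogonal_singleton_iff_inner_right, inner_sub_right, hD0f,
      inner_smul_right, he1e1, mul_one, sub_self]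
  · have hadj : (Finset.univ.noncommProd (fun i => Mz i ^ β i)
          (fun i _ j _ _ => (hMzc i j).pow_pow (β i) (β j))).adjoint ((ev w).adjoint 1) =
        (∏ i, (starRingEnd ℂ) (w i) ^ β i) • (ev w).adjoint 1 := by
      refine (ContinuousLinearMap.adjoint_apply_adjoint_one_of_apply_eq_mul
        (ContinuousLinearMap.apply_noncommProd_pow (hMz · w hw) β _ _)).trans ?_
      simp only [map_prod, map_pow]
    rw [hadj, map_smul, hD0kernel w hw, map_smul]

/-- if `M_z ∈ L(H_K)^d` is a K-contraction, then
`(1/K)(M_z) = SOT-Σ cₙ σ_{M_z}ⁿ(1)` is the orthogonal projection `P_ℂ` onto the constants,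
and `M_z^α P_ℂ M_z^{*β}` is the rank-one operator sending `K(·,w)` to `w̄^β z^α`. -/
theorem stmt13 {d : ℕ} {HK : Type*}
    [NormedAddCommGroup HK] [InnerProductSpace ℂ HK] [CompleteSpace HK]
    (a : ℕ → ℝ) (ha0 : a 0 = 1) (hapos : ∀ n, 0 < a n)
    (m M : ℝ) (hm : 0 < m) (hbd : ∀ n, m ≤ a n / a (n + 1) ∧ a n / a (n + 1) ≤ M)
    -- the scalar functional Hilbert space H_K with kernel K(z,w) = Σ aₙ⟨z,w⟩ⁿ
    (ev : EuclideanSpace ℂ (Fin d) → (HK →L[ℂ] ℂ))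
    (hsep : ∀ f : HK, (∀ z, ‖z‖ < 1 → ev z f = 0) → f = 0)
    (hkernel : ∀ z w : EuclideanSpace ℂ (Fin d), ‖z‖ < 1 → ‖w‖ < 1 → ∀ x : ℂ,
      HasSum (fun n => ((a n : ℂ) * ⟪w, z⟫_ℂ ^ n) • x) (ev z ((ev w).adjoint x)))
    (Mz : Fin d → HK →L[ℂ] HK)
    (hMz : ∀ (i) (z), ‖z‖ < 1 → ∀ f, ev z (Mz i f) = z i • ev z f)
    (hMzc : ∀ i j, Commute (Mz i) (Mz j))
    -- the constant function 1
    (e1 : HK) (he1 : ∀ z, ‖z‖ < 1 → ev z e1 = 1)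
    -- 1/k(z) = Σ cₙ zⁿ and M_z is a K-contraction with (1/K)(M_z) = D0 ≥ 0
    (c : ℕ → ℝ) (hc0 : c 0 = 1)
    (hcauchy : ∀ n, 1 ≤ n → ∑ j ∈ Finset.range (n + 1), a j * c (n - j) = 0)
    (σit : (HK →L[ℂ] HK) → ℕ → (HK →L[ℂ] HK))
    (hσ0 : ∀ X, σit X 0 = X)
    (hσs : ∀ X n, σit X (n + 1) = ∑ i, Mz i ∘L σit X n ∘L (Mz i).adjoint)
    (D0 : HK →L[ℂ] HK) (hD0pos : D0.IsPositive)
    (hD0 : ∀ f : HK, HasSum (fun n => ((c n : ℝ) : ℂ) • σit 1 n f) (D0 f)) :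
    -- (1/K)(M_z) is the orthogonal projection onto the constants
    (∀ f : HK, D0 f ∈ Submodule.span ℂ {e1} ∧ f - D0 f ∈ (Submodule.span ℂ {e1})ᗮ) ∧
    -- M_z^α P_ℂ M_z^{*β} is the rank-one operator z^α ⊗ z^β
    (∀ (α β : Fin d → ℕ) (w : EuclideanSpace ℂ (Fin d)), ‖w‖ < 1 →
      (Finset.univ.noncommProd (fun i => Mz i ^ α i)
          (fun i _ j _ _ => (hMzc i j).pow_pow (α i) (α j)))
        (D0 ((Finset.univ.noncommProd (fun i => Mz i ^ β i)
          (fun i _ j _ _ => (hMzc i j).pow_pow (β i) (β j))).adjoint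
            ((ev w).adjoint 1))) =
      (∏ i, (starRingEnd ℂ) (w i) ^ β i) •
        (Finset.univ.noncommProd (fun i => Mz i ^ α i)
          (fun i _ j _ _ => (hMzc i j).pow_pow (α i) (α j))) e1) :=
  stmt13_general a ha0 ev hsep hkernel Mz hMz hMzc e1 he1 c hc0 hcauchy σit hσ0 hσs D0 hD0
end

section
/- Let 𝒟 and ℰ be Hilbert spaces and suppose W : H_{K}(𝒟) → H_K(ℰ) is a unitary operator that intertwines M_{z_i} ⊗ 1_𝒟 with M_{z_i} ⊗ 1_ℰ for i = 1,...,d, and whose adjoint also acts as a multiplier. If A : B_d → L(𝒟, ℰ) is the multiplier symbol of W and A(z)A(w)^* = 1_ℰ for all z, w ∈ B_d, then A is constant, A ≡ U for a unitary U ∈ L(𝒟,ℰ), and W = 1_{H_K} ⊗ U. -/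
open scoped InnerProductSpace

lemma my_comp_adjoint_zero {E F : Type*}
    [NormedAddCommGroup E] [InnerProductSpace ℂ E] [CompleteSpace E]
    [NormedAddCommGroup F] [InnerProductSpace ℂ F] [CompleteSpace F]
    (T : E →L[ℂ] F) (h : T ∘L T.adjoint = 0) : T = 0 := by
  have hadj : T.adjoint = 0 := by
    ext x
    have h1 : ⟪T.adjoint x, T.adjoint x⟫_ℂ = 0 := by
      rw [ContinuousLinearMap.adjoint_inner_left]
      have h2 : T (T.adjoint x) = 0 := by
        have := congrFun (congrArg DFunLike.coe h) x
        simpa using this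
      simp [h2]
    simpa using inner_self_eq_zero.mp h1
  calc T = T.adjoint.adjoint := (ContinuousLinearMap.adjoint_adjoint T).symm
    _ = 0 := by rw [hadj]; simp
/-- a unitary `W : H_K(𝒟) → H_K(ℰ)` intertwining `M_z ⊗ 1_𝒟` with
`M_z ⊗ 1_ℰ`, whose adjoint also acts as a multiplier, and whose multiplier symbol `A`
satisfies `A(z)A(w)^* = 1_ℰ` for all `z, w ∈ B_d`, has constant symbol `A ≡ U` with `U`
unitary, and `W = 1_{H_K} ⊗ U`. -/
theorem stmt14 {d : ℕ} {𝒟 ℰ HKD HKE : Type*}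
    [NormedAddCommGroup 𝒟] [InnerProductSpace ℂ 𝒟] [CompleteSpace 𝒟]
    [NormedAddCommGroup ℰ] [InnerProductSpace ℂ ℰ] [CompleteSpace ℰ]
    [NormedAddCommGroup HKD] [InnerProductSpace ℂ HKD] [CompleteSpace HKD]
    [NormedAddCommGroup HKE] [InnerProductSpace ℂ HKE] [CompleteSpace HKE]
    (a : ℕ → ℝ) (ha0 : a 0 = 1) (hapos : ∀ n, 0 < a n)
    (m M : ℝ) (hm : 0 < m) (hbd : ∀ n, m ≤ a n / a (n + 1) ∧ a n / a (n + 1) ≤ M)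
    -- the functional Hilbert spaces H_K(𝒟) and H_K(ℰ)
    (evD : EuclideanSpace ℂ (Fin d) → (HKD →L[ℂ] 𝒟))
    (hsepD : ∀ f : HKD, (∀ z, ‖z‖ < 1 → evD z f = 0) → f = 0)
    (hkernelD : ∀ z w : EuclideanSpace ℂ (Fin d), ‖z‖ < 1 → ‖w‖ < 1 → ∀ x : 𝒟,
      HasSum (fun n => ((a n : ℂ) * ⟪w, z⟫_ℂ ^ n) • x) (evD z ((evD w).adjoint x)))
    (evE : EuclideanSpace ℂ (Fin d) → (HKE →L[ℂ] ℰ))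
    (hsepE : ∀ f : HKE, (∀ z, ‖z‖ < 1 → evE z f = 0) → f = 0)
    (hkernelE : ∀ z w : EuclideanSpace ℂ (Fin d), ‖z‖ < 1 → ‖w‖ < 1 → ∀ x : ℰ,
      HasSum (fun n => ((a n : ℂ) * ⟪w, z⟫_ℂ ^ n) • x) (evE z ((evE w).adjoint x)))
    (MzD : Fin d → HKD →L[ℂ] HKD)
    (hMzD : ∀ (i) (z), ‖z‖ < 1 → ∀ f, evD z (MzD i f) = z i • evD z f)
    (MzE : Fin d → HKE →L[ℂ] HKE)
    (hMzE : ∀ (i) (z), ‖z‖ < 1 → ∀ f, evE z (MzE i f) = z i • evE z f)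
    -- W is unitary and intertwines M_z ⊗ 1_𝒟 with M_z ⊗ 1_ℰ
    (W : HKD →L[ℂ] HKE) (hWiso : ∀ f, ‖W f‖ = ‖f‖) (hWsurj : Function.Surjective W)
    (hWint : ∀ i, W ∘L MzD i = MzE i ∘L W)
    -- W and W^* act as multipliers, with symbols A and B
    (A : EuclideanSpace ℂ (Fin d) → (𝒟 →L[ℂ] ℰ))
    (hA : ∀ (f : HKD) (z), ‖z‖ < 1 → evE z (W f) = A z (evD z f))
    (B : EuclideanSpace ℂ (Fin d) → (ℰ →L[ℂ] 𝒟))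
    (hB : ∀ (g : HKE) (z), ‖z‖ < 1 → evD z (W.adjoint g) = B z (evE z g))
    -- A(z)A(w)^* = 1_ℰ for all z, w ∈ B_d
    (hAA : ∀ z w, ‖z‖ < 1 → ‖w‖ < 1 → A z ∘L (A w).adjoint = ContinuousLinearMap.id ℂ ℰ) :
    ∃ U : 𝒟 →L[ℂ] ℰ,
      (∀ z, ‖z‖ < 1 → A z = U) ∧
      U.adjoint ∘L U = ContinuousLinearMap.id ℂ 𝒟 ∧
      U ∘L U.adjoint = ContinuousLinearMap.id ℂ ℰ ∧
      ∀ (f : HKD) (z), ‖z‖ < 1 → evE z (W f) = U (evD z f) := by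
  have h0 : ‖(0 : EuclideanSpace ℂ (Fin d))‖ < 1 := by simp
  -- A is constant on the ball
  have hconst : ∀ z w, ‖z‖ < 1 → ‖w‖ < 1 → A z = A w := by
    intro z w hz hw
    have hsub : A z - A w = 0 := by
      apply my_comp_adjoint_zero
      rw [map_sub]
      have e1 := hAA z w hz hw
      have e2 := hAA w z hw hz
      have e3 := hAA z z hz hz
      have e4 := hAA w w hw hw
      ext x
      simp only [ContinuousLinearMap.comp_apply, ContinuousLinearMap.sub_apply,
        ContinuousLinearMap.zero_apply, map_sub]
      have f1 := congrFun (congrArg DFunLike.coe e1) x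
      have f2 := congrFun (congrArg DFunLike.coe e2) x
      have f3 := congrFun (congrArg DFunLike.coe e3) x
      have f4 := congrFun (congrArg DFunLike.coe e4) x
      simp only [ContinuousLinearMap.comp_apply, ContinuousLinearMap.id_apply] at f1 f2 f3 f4
      rw [f1, f2, f3, f4]
      abel
    exact sub_eq_zero.mp hsub
  set U := A 0 with hU
  -- ev at 0 recovers the vector: evD 0 ((evD 0)* x) = x
  have hevD0 : ∀ x : 𝒟, evD 0 ((evD 0).adjoint x) = x := by
    intro x
    have hk := hkernelD 0 0 h0 h0 x
    have hz : ⟪(0 : EuclideanSpace ℂ (Fin d)), (0 : EuclideanSpace ℂ (Fin d))⟫_ℂ = 0 :=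
      inner_zero_left _
    have hs : HasSum (fun n : ℕ => ((a n : ℂ) * (0 : ℂ) ^ n) • x) x := by
      have h5 := hasSum_single (f := fun n : ℕ => ((a n : ℂ) * (0 : ℂ) ^ n) • x) 0
        (by intro n hn; simp [zero_pow hn])
      simpa [ha0] using h5
    rw [hz] at hk
    exact hk.unique hs
  have hevD0surj : Function.Surjective (evD 0) := fun x => ⟨(evD 0).adjoint x, hevD0 x⟩
  -- W* W = 1
  have hWinner : ∀ f g : HKD, ⟪W f, W g⟫_ℂ = ⟪f, g⟫_ℂ := by
    intro f g
    exact (⟨W.toLinearMap, hWiso⟩ : HKD →ₗᵢ[ℂ] HKE).inner_map_map f g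
  have hWstar : ∀ f : HKD, W.adjoint (W f) = f := by
    intro f
    apply ext_inner_right ℂ
    intro g
    rw [ContinuousLinearMap.adjoint_inner_left]
    exact hWinner f g
  -- B 0 ∘ U = 1
  have hBU : ∀ x : 𝒟, B 0 (U x) = x := by
    intro x
    obtain ⟨f, hf⟩ := hevD0surj x
    have h1 : evD 0 (W.adjoint (W f)) = B 0 (evE 0 (W f)) := hB (W f) 0 h0
    rw [hWstar, hA f 0 h0, hf] at h1
    exact h1.symm
  have hUU : U ∘L U.adjoint = ContinuousLinearMap.id ℂ ℰ := hAA 0 0 h0 h0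
  have hadjB : U.adjoint = B 0 := by
    ext y
    have h1 : B 0 (U (U.adjoint y)) = U.adjoint y := hBU _
    have h2 : U (U.adjoint y) = y := by
      have := congrFun (congrArg DFunLike.coe hUU) y
      simpa using this
    rw [h2] at h1
    exact h1.symm
  refine ⟨U, fun z hz => hconst z 0 hz h0, ?_, hUU, ?_⟩
  · ext x
    simp only [ContinuousLinearMap.comp_apply, ContinuousLinearMap.id_apply, hadjB]
    exact hBU x
  · intro f z hz
    rw [hA f z hz, hconst z 0 hz h0]
end

section
/- Let T ∈ L(H)^d be a pure K-contraction. Then the canonical K-dilation j : H → H_K(𝒟), j(x) = Σ_α a_{|α|}γ_α (CT^{*α}x) z^α, is minimal: the only closed subspace of H_K(𝒟) reducing for M_z and containing Im j is H_K(𝒟) itself. -/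
/-!
Let `M` be closed and reducing for `M_z`, and let `W = ⋂ᵢ ker M_{zᵢ}*`. The projection `P_M`
commutes with every `M_{zᵢ}*`, so it leaves `W` invariant and therefore commutes with `P_W`:
`M` contains `P_W v` for every `v ∈ M`.

Write `k_w = (ev w)*` and `⟨M_z, w⟩ = ∑ᵢ w̄ᵢ M_{zᵢ}`. For `w` near `0` the kernel vectors
expand as `k_w x = ∑ₙ aₙ ⟨M_z, w⟩ⁿ k₀ x`. Since `X ∈ W` is orthogonal to the range of every
`M_{zᵢ}`, only the term `n = 0` survives in `⟪X, k_w x⟫`, so `X` is constant near `0`. Hence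
`X = k₀ (X 0)`, because a function of `H_K(𝒟)` vanishing near `0` vanishes on the whole ball:
apply the identity theorem to `t ↦ ⟪x, f (t • z)⟫`, holomorphic as a locally uniform limit of
kernel functions. As `v - P_W v ⊥ W ∋ k₀ y`, this gives `P_W v = k₀ (v 0)`, which is `k₀ (C h)`
for `v = j h`.

So `M` contains `k₀ (C h)`, hence every constant `k₀ y` by density of the range of `C`, hence
`k_w y` for `w` near `0` by the same expansion; an `f ⊥ M` then vanishes near `0`, so `f = 0`.
-/

open Filter Topology
open scoped InnerProductSpace

namespace Submodule

variable {𝕜 E : Type*} [RCLike 𝕜] [NormedAddCommGroup E] [InnerProductSpace 𝕜 E] [CompleteSpace E]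

lemma commute_starProjection_of_mem_invtSubmodule {K : Submodule 𝕜 E} [K.HasOrthogonalProjection]
    {T : E →L[𝕜] E} (hT : K ∈ Module.End.invtSubmodule (T : E →ₗ[𝕜] E))
    (hT' : K ∈ Module.End.invtSubmodule (T.adjoint : E →ₗ[𝕜] E)) :
    Commute K.starProjection T :=
  (ContinuousLinearMap.IsIdempotentElem.commute_iff K.isIdempotentElem_starProjection).mpr
    ⟨by rwa [K.range_starProjection],
      by rw [K.ker_starProjection]; exact ContinuousLinearMap.orthogonal_mem_invtSubmodule hT'⟩

lemma starProjection_apply_mem_of_mem_invtSubmodule {K U : Submodule 𝕜 E}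
    [K.HasOrthogonalProjection] [U.HasOrthogonalProjection]
    (hU : U ∈ Module.End.invtSubmodule (K.starProjection : E →ₗ[𝕜] E)) {v : E} (hv : v ∈ K) :
    U.starProjection v ∈ K := by
  have hc : Commute U.starProjection K.starProjection :=
    commute_starProjection_of_mem_invtSubmodule hU
      (by rwa [(isSelfAdjoint_starProjection K).adjoint_eq])
  rw [← K.starProjection_eq_self_iff.mpr hv, ← mul_apply_eq_comp, hc.eq, mul_apply_eq_comp]
  exact K.starProjection_apply_mem _

end Submodule

namespace KernelSpace

variable {d : ℕ} {𝒟 HK : Type*}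
  [NormedAddCommGroup 𝒟] [InnerProductSpace ℂ 𝒟] [NormedAddCommGroup HK] [InnerProductSpace ℂ HK]
  {a : ℕ → ℝ} {ev : EuclideanSpace ℂ (Fin d) → HK →L[ℂ] 𝒟} {Mz : Fin d → HK →L[ℂ] HK}

local notation "𝔼" => EuclideanSpace ℂ (Fin d)

noncomputable def innerMul (Mz : Fin d → HK →L[ℂ] HK) (w : 𝔼) : HK →L[ℂ] HK :=
  ∑ i, starRingEnd ℂ (w i) • Mz i

lemma ev_innerMul_pow (hMz : ∀ i (z : 𝔼), ‖z‖ < 1 → ∀ f, ev z (Mz i f) = z i • ev z f)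
    (w : 𝔼) {u : 𝔼} (hu : ‖u‖ < 1) (n : ℕ) (g : HK) :
    ev u ((innerMul Mz w ^ n) g) = ⟪w, u⟫_ℂ ^ n • ev u g := by
  induction n generalizing g with
  | zero => simp
  | succ n ih =>
    rw [pow_succ, mul_apply_eq_comp, ih, pow_succ, mul_smul]
    simp only [innerMul, sum_apply, smul_apply, map_sum,
      map_smul, hMz _ _ hu, smul_smul, PiLp.inner_apply, RCLike.inner_apply, Finset.sum_smul,
      mul_comm]

lemma norm_innerMul_le (w : 𝔼) : ‖innerMul Mz w‖ ≤ (∑ i, ‖Mz i‖) * ‖w‖ := by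
  rw [innerMul, Finset.sum_mul]
  refine (norm_sum_le _ _).trans (Finset.sum_le_sum fun i _ => ?_)
  rw [norm_smul, RCLike.norm_conj, mul_comm]
  gcongr
  exact PiLp.norm_apply_le w i

lemma innerMul_pow_apply_mem {M : Submodule ℂ HK}
    (hM : ∀ i, M ∈ Module.End.invtSubmodule (Mz i : HK →ₗ[ℂ] HK)) (w : 𝔼) (n : ℕ) {g : HK}
    (hg : g ∈ M) : (innerMul Mz w ^ n) g ∈ M := by
  induction n with
  | zero => simpa using hg
  | succ n ih =>
    rw [pow_succ', mul_apply_eq_comp, innerMul, sum_apply]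
    exact M.sum_mem fun i _ =>
      M.smul_mem _ ((Module.End.mem_invtSubmodule_iff_forall_mem_of_mem _).mp (hM i) _ ih)

variable [CompleteSpace 𝒟] [CompleteSpace HK]

/-- `ev z` is evaluation at `z` in `H_K(𝒟)`, so that `(ev w).adjoint x` is the kernel vector
`K(·, w) x`. -/
def HasKernelExpansion (a : ℕ → ℝ) (ev : 𝔼 → HK →L[ℂ] 𝒟) : Prop :=
  ∀ z w : 𝔼, ‖z‖ < 1 → ‖w‖ < 1 → ∀ x : 𝒟,
    HasSum (fun n => ((a n : ℂ) * ⟪w, z⟫_ℂ ^ n) • x) (ev z ((ev w).adjoint x))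

lemma ev_ev_adjoint_zero (ha0 : a 0 = 1) (hK : HasKernelExpansion a ev) {u : 𝔼} (hu : ‖u‖ < 1)
    (x : 𝒟) : ev u ((ev 0).adjoint x) = x := by
  refine (hK u 0 hu (by simp) x).unique ?_
  convert hasSum_ite_eq 0 x using 1
  ext n
  rcases n with _ | n <;> simp [ha0]

lemma hasSum_inner_ev_ev_adjoint (hK : HasKernelExpansion a ev) {u w : 𝔼} (hu : ‖u‖ < 1)
    (hw : ‖w‖ < 1) (x y : 𝒟) :
    HasSum (fun n => (a n : ℂ) * ⟪w, u⟫_ℂ ^ n * ⟪y, x⟫_ℂ) ⟪y, ev u ((ev w).adjoint x)⟫_ℂ := by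
  simpa [inner_smul_right] using (innerSL ℂ y).hasSum (hK u w hu hw x)

lemma hasSum_norm_sq_ev_adjoint (hK : HasKernelExpansion a ev) {w : 𝔼} (hw : ‖w‖ < 1) (x : 𝒟) :
    HasSum (fun n => a n * (‖w‖ ^ 2) ^ n * ‖x‖ ^ 2) (‖(ev w).adjoint x‖ ^ 2) := by
  have h := hasSum_inner_ev_ev_adjoint hK hw hw x x
  rw [← ContinuousLinearMap.adjoint_inner_left, inner_self_eq_norm_sq_to_K] at h
  simp only [inner_self_eq_norm_sq_to_K] at h
  exact Complex.hasSum_ofReal.mp (by push_cast at h ⊢; exact h)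

lemma norm_ev_adjoint_le_of_norm_le (hapos : ∀ n, 0 < a n) (hK : HasKernelExpansion a ev)
    {u v : 𝔼} (hv : ‖v‖ < 1) (huv : ‖u‖ ≤ ‖v‖) (x : 𝒟) :
    ‖(ev u).adjoint x‖ ≤ ‖(ev v).adjoint x‖ := by
  refine (pow_le_pow_iff_left₀ (norm_nonneg _) (norm_nonneg _) two_ne_zero).mp ?_
  refine hasSum_le (fun n => ?_) (hasSum_norm_sq_ev_adjoint hK (huv.trans_lt hv) x)
    (hasSum_norm_sq_ev_adjoint hK hv x)
  gcongr
  exact (hapos n).le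

lemma summable_mul_pow [Nontrivial 𝒟] (hK : HasKernelExpansion a ev) {z : 𝔼} (hz : z ≠ 0)
    {t : ℝ} (ht0 : 0 ≤ t) (ht1 : t < 1) : Summable fun n => a n * t ^ n := by
  obtain ⟨x, hx⟩ := exists_ne (0 : 𝒟)
  set w : 𝔼 := ((√t / ‖z‖ : ℝ) : ℂ) • z
  have hw : ‖w‖ = √t := by
    simp [w, norm_smul, abs_of_nonneg (Real.sqrt_nonneg t), norm_ne_zero_iff.mpr hz]
  have hw1 : ‖w‖ < 1 := by rw [hw, Real.sqrt_lt' one_pos, one_pow]; exact ht1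
  have hs := (hasSum_norm_sq_ev_adjoint hK hw1 x).summable
  rw [hw, Real.sq_sqrt ht0] at hs
  exact (summable_mul_right_iff (by positivity)).mp hs

lemma dense_span_ev_adjoint
    (hsep : ∀ f : HK, (∀ z : 𝔼, ‖z‖ < 1 → ev z f = 0) → f = 0) :
    Dense (Submodule.span ℂ {v | ∃ w : 𝔼, ‖w‖ < 1 ∧ ∃ y, (ev w).adjoint y = v} : Set HK) := by
  rw [Submodule.dense_iff_topologicalClosure_eq_top, Submodule.topologicalClosure_eq_top_iff,
    Submodule.eq_bot_iff]
  intro f hf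
  refine hsep f fun w hw => ext_inner_left ℂ fun y => ?_
  rw [← ContinuousLinearMap.adjoint_inner_left, inner_zero_right]
  exact hf _ (Submodule.subset_span ⟨w, hw, y, rfl⟩)

lemma differentiableOn_inner_ev_smul_ev_adjoint (hapos : ∀ n, 0 < a n)
    (hK : HasKernelExpansion a ev) {z : 𝔼} {R : ℝ} (hR : R * ‖z‖ < 1)
    (hsum : Summable fun n => a n * (R * ‖z‖) ^ n) {u : 𝔼} (hu : ‖u‖ < 1) (x y : 𝒟) :
    DifferentiableOn ℂ (fun t : ℂ => ⟪x, ev (t • z) ((ev u).adjoint y)⟫_ℂ)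
      (Metric.ball 0 R) := by
  refine (Complex.differentiableOn_tsum_of_summable_norm (hsum.mul_right (‖x‖ * ‖y‖))
    (F := fun n t => (a n : ℂ) * (t * ⟪u, z⟫_ℂ) ^ n * ⟪x, y⟫_ℂ)
    (fun n => by fun_prop) Metric.isOpen_ball fun n t ht => ?_).congr fun t ht => ?_
  · rw [mem_ball_zero_iff] at ht
    have hu' : ‖⟪u, z⟫_ℂ‖ ≤ ‖z‖ :=
      (norm_inner_le_norm u z).trans (mul_le_of_le_one_left (norm_nonneg z) hu.le)
    have ha : 0 ≤ a n := (hapos n).le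
    have hR0 : 0 ≤ R := (norm_nonneg t).trans ht.le
    simp only [norm_mul, norm_pow, Complex.norm_real, Real.norm_of_nonneg ha]
    gcongr
    exact norm_inner_le_norm x y
  · have htz : ‖t • z‖ < 1 := by
      rw [mem_ball_zero_iff] at ht
      rw [norm_smul]
      exact lt_of_le_of_lt (by gcongr) hR
    simpa [inner_smul_right] using ((hasSum_inner_ev_ev_adjoint hK htz hu y x).tsum_eq).symm

lemma differentiableOn_inner_ev_smul_of_mem_span (hapos : ∀ n, 0 < a n)
    (hK : HasKernelExpansion a ev) {z : 𝔼} {R : ℝ} (hR : R * ‖z‖ < 1)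
    (hsum : Summable fun n => a n * (R * ‖z‖) ^ n) (x : 𝒟) {v : HK}
    (hv : v ∈ Submodule.span ℂ {v | ∃ w : 𝔼, ‖w‖ < 1 ∧ ∃ y, (ev w).adjoint y = v}) :
    DifferentiableOn ℂ (fun t : ℂ => ⟪x, ev (t • z) v⟫_ℂ) (Metric.ball 0 R) := by
  induction hv using Submodule.span_induction with
  | mem v hv =>
    obtain ⟨w, hw, y, rfl⟩ := hv
    exact differentiableOn_inner_ev_smul_ev_adjoint hapos hK hR hsum hw x y
  | zero => simp
  | add v v' _ _ hv hv' =>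
    simp only [map_add, inner_add_right]
    exact hv.add hv'
  | smul c v _ hv =>
    simp only [map_smul, inner_smul_right]
    exact hv.const_mul c

lemma norm_inner_ev_smul_sub_le (hapos : ∀ n, 0 < a n) (hK : HasKernelExpansion a ev) {z : 𝔼}
    {R : ℝ} (hR : R * ‖z‖ < 1) {t : ℂ} (ht : t ∈ Metric.ball 0 R) (x : 𝒟) (g h : HK) :
    ‖⟪x, ev (t • z) g⟫_ℂ - ⟪x, ev (t • z) h⟫_ℂ‖ ≤ ‖(ev ((R : ℂ) • z)).adjoint x‖ * ‖g - h‖ := by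
  rw [mem_ball_zero_iff] at ht
  have hR0 : 0 ≤ R := (norm_nonneg t).trans ht.le
  have hRz : ‖(R : ℂ) • z‖ = R * ‖z‖ := by
    rw [norm_smul, Complex.norm_real, Real.norm_of_nonneg hR0]
  rw [← inner_sub_right, ← map_sub, ← ContinuousLinearMap.adjoint_inner_left]
  refine (norm_inner_le_norm _ _).trans ?_
  gcongr
  refine norm_ev_adjoint_le_of_norm_le hapos hK (hRz ▸ hR) ?_ x
  rw [hRz, norm_smul]
  gcongr

lemma differentiableOn_inner_ev_smul
    (hsep : ∀ f : HK, (∀ z : 𝔼, ‖z‖ < 1 → ev z f = 0) → f = 0) (hapos : ∀ n, 0 < a n)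
    (hK : HasKernelExpansion a ev) {z : 𝔼} {R : ℝ} (hR : R * ‖z‖ < 1)
    (hsum : Summable fun n => a n * (R * ‖z‖) ^ n) (x : 𝒟) (g : HK) :
    DifferentiableOn ℂ (fun t : ℂ => ⟪x, ev (t • z) g⟫_ℂ) (Metric.ball 0 R) := by
  set V := Submodule.span ℂ {v | ∃ w : 𝔼, ‖w‖ < 1 ∧ ∃ y, (ev w).adjoint y = v}
  set B := ‖(ev ((R : ℂ) • z)).adjoint x‖
  have hlim : TendstoUniformlyOn (fun h (t : ℂ) => ⟪x, ev (t • z) h⟫_ℂ)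
      (fun t => ⟪x, ev (t • z) g⟫_ℂ) (𝓝[V] g) (Metric.ball 0 R) := by
    refine Metric.tendstoUniformlyOn_iff.mpr fun ε hε => ?_
    have hδ : 0 < ε / (B + 1) := by positivity
    filter_upwards [mem_nhdsWithin_of_mem_nhds (Metric.ball_mem_nhds g hδ)] with h hh t ht
    rw [Metric.mem_ball, dist_comm, dist_eq_norm] at hh
    rw [dist_eq_norm]
    calc _ ≤ B * ‖g - h‖ := norm_inner_ev_smul_sub_le hapos hK hR ht x g h
      _ ≤ (B + 1) * ‖g - h‖ := by gcongr; linarith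
      _ < (B + 1) * (ε / (B + 1)) := by gcongr
      _ = ε := mul_div_cancel₀ ε (by positivity)
  have : (𝓝[V] g).NeBot := mem_closure_iff_nhdsWithin_neBot.mp (dense_span_ev_adjoint hsep g)
  exact hlim.tendstoLocallyUniformlyOn.differentiableOn
    (eventually_nhdsWithin_of_forall fun v hv =>
      differentiableOn_inner_ev_smul_of_mem_span hapos hK hR hsum x hv) Metric.isOpen_ball

lemma eq_zero_of_eventually_ev_eq_zero [Nontrivial 𝒟]
    (hsep : ∀ f : HK, (∀ z : 𝔼, ‖z‖ < 1 → ev z f = 0) → f = 0) (hapos : ∀ n, 0 < a n)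
    (hK : HasKernelExpansion a ev) {g : HK} (hg : ∀ᶠ w in 𝓝 (0 : 𝔼), ev w g = 0) : g = 0 := by
  refine hsep g fun z hz => ?_
  rcases eq_or_ne z 0 with rfl | hz0
  · exact hg.self_of_nhds
  set R : ℝ := 2 / (1 + ‖z‖)
  have hRz : R * ‖z‖ < 1 := by
    rw [div_mul_eq_mul_div, div_lt_one (by positivity)]
    linarith
  have hR1 : 1 < R := by
    rw [lt_div_iff₀ (by positivity)]
    linarith
  refine ext_inner_left ℂ fun x => ?_
  set φ : ℂ → ℂ := fun t => ⟪x, ev (t • z) g⟫_ℂ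
  have hφ : AnalyticOnNhd ℂ φ (Metric.ball 0 R) :=
    (differentiableOn_inner_ev_smul hsep hapos hK hRz
      (summable_mul_pow hK hz0 (by positivity) hRz) x g).analyticOnNhd Metric.isOpen_ball
  have hφ0 : φ =ᶠ[𝓝 0] 0 := by
    have hsmul : Tendsto (fun t : ℂ => t • z) (𝓝 0) (𝓝 0) := by
      simpa using (continuous_id.smul continuous_const).tendsto (0 : ℂ) (f := fun t : ℂ => t • z)
    filter_upwards [hsmul.eventually hg] with t ht
    simp [φ, ht]
  have h1 : (1 : ℂ) ∈ Metric.ball 0 R := mem_ball_zero_iff.mpr (by rwa [norm_one])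
  simpa [φ] using hφ.eqOn_zero_of_preconnected_of_eventuallyEq_zero
    (convex_ball 0 R).isPreconnected (Metric.mem_ball_self (by linarith)) hφ0 h1

lemma hasSum_innerMul_pow [Nontrivial 𝒟] (ha0 : a 0 = 1) (hapos : ∀ n, 0 < a n)
    (hsep : ∀ f : HK, (∀ z : 𝔼, ‖z‖ < 1 → ev z f = 0) → f = 0) (hK : HasKernelExpansion a ev)
    (hMz : ∀ i (z : 𝔼), ‖z‖ < 1 → ∀ f, ev z (Mz i f) = z i • ev z f)
    {w : 𝔼} (hw : ‖w‖ < 1) (hMw : (∑ i, ‖Mz i‖) * ‖w‖ < 1) (x : 𝒟) :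
    HasSum (fun n => (a n : ℂ) • (innerMul Mz w ^ n) ((ev 0).adjoint x)) ((ev w).adjoint x) := by
  have hsum : Summable fun n => a n * ((∑ i, ‖Mz i‖) * ‖w‖) ^ n := by
    rcases eq_or_ne w 0 with rfl | hw0
    · exact summable_of_ne_finset_zero (s := {0}) fun n hn => by simp_all
    · exact summable_mul_pow hK hw0 (by positivity) hMw
  have hterm (n : ℕ) : ‖(a n : ℂ) • (innerMul Mz w ^ n) ((ev 0).adjoint x)‖
      ≤ a n * ((∑ i, ‖Mz i‖) * ‖w‖) ^ n * ‖(ev 0).adjoint x‖ := by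
    rw [norm_smul, Complex.norm_real, Real.norm_of_nonneg (hapos n).le, mul_assoc]
    gcongr
    · exact (hapos n).le
    rcases n.eq_zero_or_pos with rfl | hn
    · simp
    refine ((innerMul Mz w ^ n).le_opNorm _).trans ?_
    gcongr
    exact (norm_pow_le' _ hn).trans (by gcongr; exact norm_innerMul_le w)
  have hY := (Summable.of_norm_bounded (hsum.mul_right _) hterm).hasSum
  convert hY using 1
  refine (sub_eq_zero.mp (hsep _ fun u hu => ?_)).symm
  rw [map_sub, sub_eq_zero]
  refine ((ev u).hasSum hY).unique ?_
  convert hK u w hu hw x using 1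
  ext n
  rw [map_smul, ev_innerMul_pow hMz w hu, ev_ev_adjoint_zero ha0 hK hu, smul_smul]

lemma eventually_hasSum_innerMul_pow [Nontrivial 𝒟] (ha0 : a 0 = 1) (hapos : ∀ n, 0 < a n)
    (hsep : ∀ f : HK, (∀ z : 𝔼, ‖z‖ < 1 → ev z f = 0) → f = 0) (hK : HasKernelExpansion a ev)
    (hMz : ∀ i (z : 𝔼), ‖z‖ < 1 → ∀ f, ev z (Mz i f) = z i • ev z f) :
    ∀ᶠ w in 𝓝 (0 : 𝔼), ∀ x : 𝒟,
      HasSum (fun n => (a n : ℂ) • (innerMul Mz w ^ n) ((ev 0).adjoint x)) ((ev w).adjoint x) := by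
  have hw : ∀ᶠ w in 𝓝 (0 : 𝔼), ‖w‖ < 1 :=
    (continuous_norm.tendsto' 0 0 norm_zero).eventually_lt_const one_pos
  have hMw : ∀ᶠ w in 𝓝 (0 : 𝔼), (∑ i, ‖Mz i‖) * ‖w‖ < 1 :=
    ((continuous_const.mul continuous_norm).tendsto' 0 0 (by simp)).eventually_lt_const one_pos
  filter_upwards [hw, hMw] with w hw hMw
  exact hasSum_innerMul_pow ha0 hapos hsep hK hMz hw hMw

noncomputable def wanderingSubspace (Mz : Fin d → HK →L[ℂ] HK) : Submodule ℂ HK :=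
  ⨅ i, LinearMap.ker ((Mz i).adjoint : HK →ₗ[ℂ] HK)

lemma mem_wanderingSubspace {X : HK} : X ∈ wanderingSubspace Mz ↔ ∀ i, (Mz i).adjoint X = 0 := by
  simp [wanderingSubspace]

instance : (wanderingSubspace Mz).HasOrthogonalProjection := by
  have : IsClosed (wanderingSubspace Mz : Set HK) := by
    simpa [wanderingSubspace] using isClosed_iInter fun i => (Mz i).adjoint.isClosed_ker
  have := this.completeSpace_coe
  infer_instance

lemma ev_adjoint_zero_mem_wanderingSubspace
    (hMz : ∀ i (z : 𝔼), ‖z‖ < 1 → ∀ f, ev z (Mz i f) = z i • ev z f) (x : 𝒟) :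
    (ev 0).adjoint x ∈ wanderingSubspace Mz :=
  mem_wanderingSubspace.mpr fun i => ext_inner_left ℂ fun g => by
    rw [ContinuousLinearMap.adjoint_inner_right, ContinuousLinearMap.adjoint_inner_right,
      hMz i 0 (by simp)]
    simp

lemma ev_zero_eq_zero_of_mem_orthogonal
    (hMz : ∀ i (z : 𝔼), ‖z‖ < 1 → ∀ f, ev z (Mz i f) = z i • ev z f)
    {r : HK} (hr : r ∈ (wanderingSubspace Mz)ᗮ) : ev 0 r = 0 :=
  ext_inner_left ℂ fun x => by
    rw [← ContinuousLinearMap.adjoint_inner_left, inner_zero_right]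
    exact Submodule.inner_right_of_mem_orthogonal (ev_adjoint_zero_mem_wanderingSubspace hMz x) hr

lemma inner_innerMul_eq_zero {X : HK} (hX : X ∈ wanderingSubspace Mz) (w : 𝔼) (g : HK) :
    ⟪X, innerMul Mz w g⟫_ℂ = 0 := by
  simp [innerMul, sum_apply, ← ContinuousLinearMap.adjoint_inner_left, mem_wanderingSubspace.mp hX]

lemma ev_adjoint_zero_ev_zero_of_mem_wanderingSubspace [Nontrivial 𝒟] (ha0 : a 0 = 1)
    (hapos : ∀ n, 0 < a n) (hsep : ∀ f : HK, (∀ z : 𝔼, ‖z‖ < 1 → ev z f = 0) → f = 0)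
    (hK : HasKernelExpansion a ev)
    (hMz : ∀ i (z : 𝔼), ‖z‖ < 1 → ∀ f, ev z (Mz i f) = z i • ev z f)
    {X : HK} (hX : X ∈ wanderingSubspace Mz) : (ev 0).adjoint (ev 0 X) = X := by
  refine sub_eq_zero.mp (eq_zero_of_eventually_ev_eq_zero hsep hapos hK ?_)
  filter_upwards [eventually_hasSum_innerMul_pow ha0 hapos hsep hK hMz,
    Metric.ball_mem_nhds (0 : 𝔼) one_pos] with w hw hw1
  rw [mem_ball_zero_iff] at hw1
  rw [map_sub, ev_ev_adjoint_zero ha0 hK hw1, sub_eq_zero]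
  refine ext_inner_right ℂ fun y => ?_
  rw [← ContinuousLinearMap.adjoint_inner_right, ← ContinuousLinearMap.adjoint_inner_right]
  -- only the constant term of the expansion of `(ev w).adjoint y` is seen by `X`
  have hconst : HasSum (fun n => innerSL ℂ X ((a n : ℂ) • (innerMul Mz w ^ n) ((ev 0).adjoint y)))
      ⟪X, (ev 0).adjoint y⟫_ℂ := by
    convert hasSum_single 0 fun n hn => ?_ using 1
    · simp [ha0]
    · obtain ⟨n, rfl⟩ := Nat.exists_eq_succ_of_ne_zero hn
      simp [pow_succ', mul_apply_eq_comp, inner_innerMul_eq_zero hX]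
  exact hconst.unique ((innerSL ℂ X).hasSum (hw y))

lemma ev_adjoint_zero_ev_zero_mem [Nontrivial 𝒟] (ha0 : a 0 = 1)
    (hapos : ∀ n, 0 < a n) (hsep : ∀ f : HK, (∀ z : 𝔼, ‖z‖ < 1 → ev z f = 0) → f = 0)
    (hK : HasKernelExpansion a ev)
    (hMz : ∀ i (z : 𝔼), ‖z‖ < 1 → ∀ f, ev z (Mz i f) = z i • ev z f)
    {M : Submodule ℂ HK} [M.HasOrthogonalProjection]
    (hM : ∀ i, M ∈ Module.End.invtSubmodule (Mz i : HK →ₗ[ℂ] HK))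
    (hM' : ∀ i, M ∈ Module.End.invtSubmodule ((Mz i).adjoint : HK →ₗ[ℂ] HK))
    {v : HK} (hv : v ∈ M) : (ev 0).adjoint (ev 0 v) ∈ M := by
  have hW : wanderingSubspace Mz ∈ Module.End.invtSubmodule (M.starProjection : HK →ₗ[ℂ] HK) := by
    refine (Module.End.mem_invtSubmodule_iff_forall_mem_of_mem _).mpr fun u hu => ?_
    refine mem_wanderingSubspace.mpr fun i => ?_
    have hc := Submodule.commute_starProjection_of_mem_invtSubmodule (hM' i)
      (by rw [ContinuousLinearMap.adjoint_adjoint]; exact hM i)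
    rw [ContinuousLinearMap.coe_coe, ← mul_apply_eq_comp, ← hc.eq, mul_apply_eq_comp,
      mem_wanderingSubspace.mp hu i, map_zero]
  have hPv := Submodule.starProjection_apply_mem_of_mem_invtSubmodule hW hv
  have hev : ev 0 ((wanderingSubspace Mz).starProjection v) = ev 0 v := by
    rw [eq_comm, ← sub_eq_zero, ← map_sub]
    exact ev_zero_eq_zero_of_mem_orthogonal hMz (Submodule.sub_starProjection_mem_orthogonal v)
  rwa [← hev, ev_adjoint_zero_ev_zero_of_mem_wanderingSubspace ha0 hapos hsep hK hMz
    (Submodule.starProjection_apply_mem _ v)]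

lemma eq_top_of_ev_adjoint_zero_mem [Nontrivial 𝒟] (ha0 : a 0 = 1)
    (hapos : ∀ n, 0 < a n) (hsep : ∀ f : HK, (∀ z : 𝔼, ‖z‖ < 1 → ev z f = 0) → f = 0)
    (hK : HasKernelExpansion a ev)
    (hMz : ∀ i (z : 𝔼), ‖z‖ < 1 → ∀ f, ev z (Mz i f) = z i • ev z f)
    {M : Submodule ℂ HK} (hMcl : IsClosed (M : Set HK))
    (hM : ∀ i, M ∈ Module.End.invtSubmodule (Mz i : HK →ₗ[ℂ] HK))
    (hconst : ∀ x, (ev 0).adjoint x ∈ M) : M = ⊤ := by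
  have := hMcl.completeSpace_coe
  rw [← Submodule.orthogonal_eq_bot_iff, Submodule.eq_bot_iff]
  intro f hf
  refine eq_zero_of_eventually_ev_eq_zero hsep hapos hK ?_
  filter_upwards [eventually_hasSum_innerMul_pow ha0 hapos hsep hK hMz] with w hw
  refine ext_inner_left ℂ fun y => ?_
  rw [← ContinuousLinearMap.adjoint_inner_left, inner_zero_right]
  refine Submodule.inner_right_of_mem_orthogonal (hMcl.mem_of_tendsto (hw y) ?_) hf
  refine Eventually.of_forall fun s => M.sum_mem fun n _ => M.smul_mem _ ?_
  exact innerMul_pow_apply_mem hM w n (hconst y)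

end KernelSpace

theorem stmt16_general {d : ℕ} {𝒟 HK H : Type*}
    [NormedAddCommGroup 𝒟] [InnerProductSpace ℂ 𝒟] [CompleteSpace 𝒟]
    [NormedAddCommGroup HK] [InnerProductSpace ℂ HK] [CompleteSpace HK]
    [NormedAddCommGroup H] [InnerProductSpace ℂ H] [CompleteSpace H]
    (a : ℕ → ℝ) (ha0 : a 0 = 1) (hapos : ∀ n, 0 < a n)
    (ev : EuclideanSpace ℂ (Fin d) → (HK →L[ℂ] 𝒟))
    (hsep : ∀ f : HK, (∀ z, ‖z‖ < 1 → ev z f = 0) → f = 0)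
    (hkernel : ∀ z w : EuclideanSpace ℂ (Fin d), ‖z‖ < 1 → ‖w‖ < 1 → ∀ x : 𝒟,
      HasSum (fun n => ((a n : ℂ) * ⟪w, z⟫_ℂ ^ n) • x) (ev z ((ev w).adjoint x)))
    (Mz : Fin d → HK →L[ℂ] HK)
    (hMz : ∀ (i) (z), ‖z‖ < 1 → ∀ f, ev z (Mz i f) = z i • ev z f)
    -- T is a pure K-contraction
    (T : Fin d → H →L[ℂ] H)
    (C : H →L[ℂ] 𝒟) (hCdense : DenseRange C)
    -- the canonical K-dilation j
    (j : H →L[ℂ] HK)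
    (hj : ∀ (h : H) (z), ‖z‖ < 1 →
      HasSum (fun n => ((a n : ℝ) : ℂ) • C (((∑ i, z i • (T i).adjoint) ^ n) h))
        (ev z (j h))) :
    -- minimality: the only closed M_z-reducing subspace containing Im j is H_K(𝒟)
    ∀ Msub : Submodule ℂ HK, IsClosed (Msub : Set HK) →
      (∀ i, Submodule.map (Mz i : HK →ₗ[ℂ] HK) Msub ≤ Msub ∧
        Submodule.map ((Mz i).adjoint : HK →ₗ[ℂ] HK) Msub ≤ Msub) →
      (∀ h : H, j h ∈ Msub) → Msub = ⊤ := by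
  intro Msub hMcl hred hjmem
  rcases subsingleton_or_nontrivial 𝒟 with h𝒟 | h𝒟
  · have : Subsingleton HK := ⟨fun f g => by
      rw [hsep f fun _ _ => Subsingleton.elim _ _, hsep g fun _ _ => Subsingleton.elim _ _]⟩
    exact Subsingleton.elim _ _
  have := hMcl.completeSpace_coe
  have hinv i := (Module.End.mem_invtSubmodule_iff_map_le _).mpr (hred i).1
  have hinv' i := (Module.End.mem_invtSubmodule_iff_map_le _).mpr (hred i).2
  have hev0 (h : H) : ev 0 (j h) = C h := by
    refine (hj h 0 (by simp)).unique ?_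
    convert hasSum_ite_eq 0 (C h) using 1
    ext n
    rcases n with _ | n <;> simp [ha0]
  refine KernelSpace.eq_top_of_ev_adjoint_zero_mem ha0 hapos hsep hkernel hMz hMcl hinv fun x => ?_
  refine hCdense.induction_on x (hMcl.preimage (ev 0).adjoint.continuous) fun h => ?_
  rw [← hev0]
  exact KernelSpace.ev_adjoint_zero_ev_zero_mem ha0 hapos hsep hkernel hMz hinv hinv' (hjmem h)

/-- the canonical K-dilation `j` of a pure K-contraction `T` is
minimal: the only closed subspace of `H_K(𝒟)` reducing for `M_z` and containing `Im j`
is `H_K(𝒟)` itself. -/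
theorem stmt16 {d : ℕ} {𝒟 HK H : Type*}
    [NormedAddCommGroup 𝒟] [InnerProductSpace ℂ 𝒟] [CompleteSpace 𝒟]
    [NormedAddCommGroup HK] [InnerProductSpace ℂ HK] [CompleteSpace HK]
    [NormedAddCommGroup H] [InnerProductSpace ℂ H] [CompleteSpace H]
    (a : ℕ → ℝ) (ha0 : a 0 = 1) (hapos : ∀ n, 0 < a n)
    (m M' : ℝ) (hm : 0 < m) (hbd : ∀ n, m ≤ a n / a (n + 1) ∧ a n / a (n + 1) ≤ M')
    (ev : EuclideanSpace ℂ (Fin d) → (HK →L[ℂ] 𝒟))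
    (hsep : ∀ f : HK, (∀ z, ‖z‖ < 1 → ev z f = 0) → f = 0)
    (hkernel : ∀ z w : EuclideanSpace ℂ (Fin d), ‖z‖ < 1 → ‖w‖ < 1 → ∀ x : 𝒟,
      HasSum (fun n => ((a n : ℂ) * ⟪w, z⟫_ℂ ^ n) • x) (ev z ((ev w).adjoint x)))
    (Mz : Fin d → HK →L[ℂ] HK)
    (hMz : ∀ (i) (z), ‖z‖ < 1 → ∀ f, ev z (Mz i f) = z i • ev z f)
    -- T is a pure K-contraction
    (T : Fin d → H →L[ℂ] H) (hT : ∀ i j, Commute (T i) (T j))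
    (c : ℕ → ℝ) (hc0 : c 0 = 1)
    (hcauchy : ∀ n, 1 ≤ n → ∑ j ∈ Finset.range (n + 1), a j * c (n - j) = 0)
    (σit : (H →L[ℂ] H) → ℕ → (H →L[ℂ] H))
    (hσ0 : ∀ X, σit X 0 = X)
    (hσs : ∀ X n, σit X (n + 1) = ∑ i, T i ∘L σit X n ∘L (T i).adjoint)
    (D0 : H →L[ℂ] H) (hD0pos : D0.IsPositive)
    (hD0 : ∀ x : H, HasSum (fun n => ((c n : ℝ) : ℂ) • σit 1 n x) (D0 x))
    (hpure : ∀ x : H, Tendsto (fun N => ∑ n ∈ Finset.range N, ((a n : ℝ) : ℂ) • σit D0 n x)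
      atTop (𝓝 x))
    (C : H →L[ℂ] 𝒟) (hCC : C.adjoint ∘L C = D0) (hCdense : DenseRange C)
    -- the canonical K-dilation j
    (j : H →L[ℂ] HK) (hjiso : ∀ h, ‖j h‖ = ‖h‖)
    (hj : ∀ (h : H) (z), ‖z‖ < 1 →
      HasSum (fun n => ((a n : ℝ) : ℂ) • C (((∑ i, z i • (T i).adjoint) ^ n) h))
        (ev z (j h)))
    (hjint : ∀ i, j ∘L (T i).adjoint = (Mz i).adjoint ∘L j) :
    -- minimality: the only closed M_z-reducing subspace containing Im j is H_K(𝒟)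
    ∀ Msub : Submodule ℂ HK, IsClosed (Msub : Set HK) →
      (∀ i, Submodule.map (Mz i : HK →ₗ[ℂ] HK) Msub ≤ Msub ∧
        Submodule.map ((Mz i).adjoint : HK →ₗ[ℂ] HK) Msub ≤ Msub) →
      (∀ h : H, j h ∈ Msub) → Msub = ⊤ :=
  stmt16_general a ha0 hapos ev hsep hkernel Mz hMz T C hCdense j hj
end

section
/- Let ℬ be a von Neumann algebra and 𝒜 ⊂ ℬ a unital subalgebra with ℬ equal to the weak-* closed linear span of {ab^* : a, b ∈ 𝒜}. For i = 1,2 let φ_i : ℬ → L(H_i) be weak-* continuous 𝒜-morphisms (unital completely positive maps with φ_i(ax) = φ_i(a)φ_i(x) for a ∈ 𝒜, x ∈ ℬ) with minimal Stinespring representations (π_i, V_i, H_{π_i}). Then for every unitary U : H_1 → H_2 with Uφ_1(a) = φ_2(a)U for all a ∈ 𝒜, there is a unique unitary W : H_{π_1} → H_{π_2} with WV_1 = V_2U and Wπ_1(x) = π_2(x)W for all x ∈ ℬ. -/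
/-!
Since `φᵢ(x) = Vᵢ* πᵢ(x) Vᵢ`, the Gram matrix of the vectors `πᵢ(X) Vᵢ h` is
`⟪πᵢ(X) Vᵢ h, πᵢ(Y) Vᵢ k⟫ = ⟪φᵢ(Y* X) h, k⟫`. Multiplicativity on `𝒜` gives
`φᵢ(a b*) = φᵢ(a) φᵢ(b)*`, so `U` intertwines `φ₁` and `φ₂` on the products `a b*`, hence, by
linearity and weak-* continuity, on all of `ℬ`. So `π₁(X) V₁ h ↦ π₂(X) V₂ U h` preserves inner
products, and by minimality it extends to a unitary `W`; it intertwines `π₁` and `π₂` and is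
unique because it is determined on a total set.
-/

open Filter Topology
open scoped InnerProductSpace

theorem LinearIsometry.surjective_of_span_subset_range {𝕜 E F : Type*} [NormedField 𝕜]
    [NormedAddCommGroup E] [NormedSpace 𝕜 E] [CompleteSpace E] [NormedAddCommGroup F]
    [NormedSpace 𝕜 F] (L : E →ₗᵢ[𝕜] F)
    {s : Set F} (hs : (Submodule.span 𝕜 s).topologicalClosure = ⊤) (hsL : s ⊆ Set.range L) :
    Function.Surjective L := by
  have hle : (Submodule.span 𝕜 s).topologicalClosure ≤ LinearMap.range L.toLinearMap :=
    Submodule.topologicalClosure_minimal _ (Submodule.span_le.2 hsL)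
      L.isometry.isClosedEmbedding.isClosed_range
  exact fun y => hle (hs ▸ Submodule.mem_top)

section Graph

variable {𝕜 E F : Type*} [RCLike 𝕜]
  [NormedAddCommGroup E] [InnerProductSpace 𝕜 E] [NormedAddCommGroup F] [InnerProductSpace 𝕜 F]

theorem inner_eq_of_mem_topologicalClosure_span {S : Set (E × F)}
    (hS : ∀ p ∈ S, ∀ q ∈ S, ⟪p.1, q.1⟫_𝕜 = ⟪p.2, q.2⟫_𝕜) {p q : E × F}
    (hp : p ∈ (Submodule.span 𝕜 S).topologicalClosure)
    (hq : q ∈ (Submodule.span 𝕜 S).topologicalClosure) : ⟪p.1, q.1⟫_𝕜 = ⟪p.2, q.2⟫_𝕜 := by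
  have hextend : ∀ p : E × F, S ⊆ {q | ⟪p.1, q.1⟫_𝕜 = ⟪p.2, q.2⟫_𝕜} →
      ∀ q ∈ (Submodule.span 𝕜 S).topologicalClosure, ⟪p.1, q.1⟫_𝕜 = ⟪p.2, q.2⟫_𝕜 := by
    intro p hpS q hq
    let ℓ : E × F →L[𝕜] 𝕜 := innerSL 𝕜 p.1 ∘L .fst 𝕜 E F - innerSL 𝕜 p.2 ∘L .snd 𝕜 E F
    have hle : (Submodule.span 𝕜 S).topologicalClosure ≤ ℓ.ker :=
      Submodule.topologicalClosure_minimal _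
        (Submodule.span_le.2 fun q hq => show ℓ q = 0 from sub_eq_zero.2 (hpS hq))
        ℓ.isClosed_ker
    exact sub_eq_zero.1 (hle hq)
  refine hextend p (fun r hr => show ⟪p.1, r.1⟫_𝕜 = ⟪p.2, r.2⟫_𝕜 from ?_) q hq
  rw [← inner_conj_symm, hextend r (hS r hr) p hp, inner_conj_symm]

theorem exists_unique_linearIsometryEquiv_of_inner_eq [CompleteSpace E] [CompleteSpace F]
    {ι : Type*} (f : ι → E) (g : ι → F) (hfg : ∀ i j, ⟪f i, f j⟫_𝕜 = ⟪g i, g j⟫_𝕜)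
    (hf : (Submodule.span 𝕜 (Set.range f)).topologicalClosure = ⊤)
    (hg : (Submodule.span 𝕜 (Set.range g)).topologicalClosure = ⊤) :
    ∃! W : E ≃ₗᵢ[𝕜] F, ∀ i, W (f i) = g i := by
  -- `W` is read off the closure `G` of the span of the graph `{(f i, g i)}`: both coordinate
  -- projections are isometric on `G`, hence bijective onto `E` and `F`.
  let G := (Submodule.span 𝕜 (Set.range fun i => (f i, g i))).topologicalClosure
  have hinner : ∀ p ∈ G, ∀ q ∈ G, ⟪p.1, q.1⟫_𝕜 = ⟪p.2, q.2⟫_𝕜 :=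
    fun p hp q hq => inner_eq_of_mem_topologicalClosure_span
      (by rintro _ ⟨i, rfl⟩ _ ⟨j, rfl⟩; exact hfg i j) hp hq
  have hnorm : ∀ p ∈ G, ‖p.1‖ = ‖p.2‖ := fun p hp => by
    rw [norm_eq_sqrt_re_inner (𝕜 := 𝕜), norm_eq_sqrt_re_inner (𝕜 := 𝕜), hinner p hp p hp]
  have : CompleteSpace G := (Submodule.isClosed_topologicalClosure _).completeSpace_coe
  let L₁ : G →ₗᵢ[𝕜] E :=
    ⟨LinearMap.fst 𝕜 E F ∘ₗ G.subtype, fun p => by simp [Prod.norm_def, hnorm p p.2]⟩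
  let L₂ : G →ₗᵢ[𝕜] F :=
    ⟨LinearMap.snd 𝕜 E F ∘ₗ G.subtype, fun p => by simp [Prod.norm_def, hnorm p p.2]⟩
  have hmem : ∀ i, (f i, g i) ∈ G := fun i =>
    Submodule.le_topologicalClosure _ (Submodule.subset_span ⟨i, rfl⟩)
  have hL₁ : Function.Surjective L₁ := by
    refine L₁.surjective_of_span_subset_range hf ?_
    rintro _ ⟨i, rfl⟩
    exact ⟨⟨_, hmem i⟩, rfl⟩
  have hL₂ : Function.Surjective L₂ := by
    refine L₂.surjective_of_span_subset_range hg ?_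
    rintro _ ⟨i, rfl⟩
    exact ⟨⟨_, hmem i⟩, rfl⟩
  let e₁ := LinearIsometryEquiv.ofSurjective L₁ hL₁
  let e₂ := LinearIsometryEquiv.ofSurjective L₂ hL₂
  have hW : ∀ i, e₁.symm.trans e₂ (f i) = g i := fun i =>
    congrArg e₂ (e₁.symm_apply_apply (⟨_, hmem i⟩ : G))
  refine ⟨e₁.symm.trans e₂, hW, fun W' hW' => ?_⟩
  refine LinearIsometryEquiv.toContinuousLinearEquiv_injective <|
    ContinuousLinearEquiv.coe_injective <|
    ContinuousLinearMap.ext_on (Submodule.dense_iff_topologicalClosure_eq_top.2 hf) ?_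
  rintro _ ⟨i, rfl⟩
  exact (hW' i).trans (hW i).symm

end Graph

section Intertwining

variable {𝕜 H₁ H₂ : Type*} [RCLike 𝕜]
  [NormedAddCommGroup H₁] [InnerProductSpace 𝕜 H₁] [NormedAddCommGroup H₂] [InnerProductSpace 𝕜 H₂]

def Intertwines (U : H₁ ≃ₗᵢ[𝕜] H₂) (A : H₁ →L[𝕜] H₁) (B : H₂ →L[𝕜] H₂) : Prop :=
  ∀ x, U (A x) = B (U x)

namespace Intertwines

variable {U : H₁ ≃ₗᵢ[𝕜] H₂} {A A' : H₁ →L[𝕜] H₁} {B B' : H₂ →L[𝕜] H₂}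

theorem add (h : Intertwines U A B) (h' : Intertwines U A' B') :
    Intertwines U (A + A') (B + B') := fun x => by
  simp only [add_apply, map_add, h x, h' x]

theorem smul (c : 𝕜) (h : Intertwines U A B) : Intertwines U (c • A) (c • B) := fun x => by
  simp only [smul_apply, map_smul, h x]

theorem mul (h : Intertwines U A B) (h' : Intertwines U A' B') :
    Intertwines U (A * A') (B * B') := fun x => by
  simp only [mul_apply_eq_comp, h (A' x), h' x]

theorem adjoint [CompleteSpace H₁] [CompleteSpace H₂] (h : Intertwines U A B) :
    Intertwines U A.adjoint B.adjoint := fun x => by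
  refine ext_inner_right 𝕜 fun v => ?_
  have hsymm : A (U.symm v) = U.symm (B v) := U.injective <| by simp [h (U.symm v)]
  rw [U.inner_map_eq_flip, ContinuousLinearMap.adjoint_inner_left,
    ContinuousLinearMap.adjoint_inner_left, hsymm, ← U.inner_map_eq_flip]

theorem of_tendsto {ι : Type*} {l : Filter ι} [l.NeBot] {A : ι → H₁ →L[𝕜] H₁}
    {B : ι → H₂ →L[𝕜] H₂} (h : ∀ i, Intertwines U (A i) (B i))
    (hA : ∀ ξ η, Tendsto (fun i => ⟪A i ξ, η⟫_𝕜) l (𝓝 ⟪A' ξ, η⟫_𝕜))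
    (hB : ∀ ξ η, Tendsto (fun i => ⟪B i ξ, η⟫_𝕜) l (𝓝 ⟪B' ξ, η⟫_𝕜)) :
    Intertwines U A' B' := fun x => by
  refine ext_inner_right 𝕜 fun v => ?_
  rw [U.inner_map_eq_flip]
  refine tendsto_nhds_unique (hA x (U.symm v)) ?_
  simpa only [← U.inner_map_eq_flip, h _ x] using hB (U x) v

end Intertwines

end Intertwining

section Stinespring

variable {Hb H K : Type*}
  [NormedAddCommGroup Hb] [InnerProductSpace ℂ Hb] [CompleteSpace Hb]
  [NormedAddCommGroup H] [InnerProductSpace ℂ H] [CompleteSpace H]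
  [NormedAddCommGroup K] [InnerProductSpace ℂ K] [CompleteSpace K]
  {ℬ : StarSubalgebra ℂ (Hb →L[ℂ] Hb)} {φ : (Hb →L[ℂ] Hb) → (H →L[ℂ] H)}
  {π : (Hb →L[ℂ] Hb) → (K →L[ℂ] K)} {V : H →L[ℂ] K}

theorem map_star_of_stinespring (hπstar : ∀ X ∈ ℬ, π (star X) = star (π X))
    (hSt : ∀ X ∈ ℬ, φ X = V.adjoint ∘L π X ∘L V) {X : Hb →L[ℂ] Hb} (hX : X ∈ ℬ) :
    φ (star X) = (φ X).adjoint := by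
  rw [hSt _ (star_mem hX), hSt _ hX, hπstar _ hX]
  simp [ContinuousLinearMap.star_eq_adjoint, ContinuousLinearMap.adjoint_comp,
    ContinuousLinearMap.comp_assoc]

theorem inner_stinespring (hπmul : ∀ X ∈ ℬ, ∀ Y ∈ ℬ, π (X * Y) = π X * π Y)
    (hπstar : ∀ X ∈ ℬ, π (star X) = star (π X))
    (hSt : ∀ X ∈ ℬ, φ X = V.adjoint ∘L π X ∘L V) {X Y : Hb →L[ℂ] Hb} (hX : X ∈ ℬ)
    (hY : Y ∈ ℬ) (h k : H) :
    ⟪π X (V h), π Y (V k)⟫_ℂ = ⟪φ (star Y * X) h, k⟫_ℂ := by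
  rw [hSt _ (mul_mem (star_mem hY) hX), hπmul _ (star_mem hY) _ hX, hπstar _ hY]
  simp [ContinuousLinearMap.star_eq_adjoint, ContinuousLinearMap.adjoint_inner_left]

end Stinespring

/-- Weak-* continuity on `ℬ`, tested on bounded nets indexed in universe `u`: on bounded sets the
weak-* topology of `L(Hb)` agrees with the weak operator topology. -/
def WeakStarContinuousOn.{u, v, w} {Hb : Type v} {H : Type w} [NormedAddCommGroup Hb]
    [InnerProductSpace ℂ Hb] [NormedAddCommGroup H] [InnerProductSpace ℂ H]
    (ℬ : Set (Hb →L[ℂ] Hb)) (φ : (Hb →L[ℂ] Hb) → (H →L[ℂ] H)) : Prop :=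
  ∀ {ι : Type u} (l : Filter ι) (X : ι → Hb →L[ℂ] Hb) (X₀ : Hb →L[ℂ] Hb)
    (Cb : ℝ), (∀ i, X i ∈ ℬ) → X₀ ∈ ℬ → (∀ i, ‖X i‖ ≤ Cb) →
    (∀ ξ η : Hb, Tendsto (fun i => ⟪X i ξ, η⟫_ℂ) l (𝓝 ⟪X₀ ξ, η⟫_ℂ)) →
    ∀ ξ η : H, Tendsto (fun i => ⟪φ (X i) ξ, η⟫_ℂ) l (𝓝 ⟪φ X₀ ξ, η⟫_ℂ)

theorem WeakStarContinuousOn.down.{u, v, w} {Hb : Type v} {H : Type w} [NormedAddCommGroup Hb]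
    [InnerProductSpace ℂ Hb] [NormedAddCommGroup H] [InnerProductSpace ℂ H]
    {ℬ : Set (Hb →L[ℂ] Hb)} {φ : (Hb →L[ℂ] Hb) → (H →L[ℂ] H)}
    (hφ : WeakStarContinuousOn.{u} ℬ φ) : WeakStarContinuousOn.{0} ℬ φ :=
  fun l X X₀ Cb hX hX₀ hCb hXX₀ ξ η => tendsto_map'_iff.1 <|
    hφ (l.map ULift.up.{u}) (fun i => X i.down) X₀ Cb (fun i => hX i.down) hX₀
      (fun i => hCb i.down) (fun ξ η => tendsto_map'_iff.2 (hXX₀ ξ η)) ξ η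

section MorphismIntertwining

variable {Hb H₁ H₂ : Type*}
  [NormedAddCommGroup Hb] [InnerProductSpace ℂ Hb] [CompleteSpace Hb]
  [NormedAddCommGroup H₁] [InnerProductSpace ℂ H₁] [CompleteSpace H₁]
  [NormedAddCommGroup H₂] [InnerProductSpace ℂ H₂] [CompleteSpace H₂]
  {U : H₁ ≃ₗᵢ[ℂ] H₂} {ℬ : StarSubalgebra ℂ (Hb →L[ℂ] Hb)}
  {φ₁ : (Hb →L[ℂ] Hb) → (H₁ →L[ℂ] H₁)} {φ₂ : (Hb →L[ℂ] Hb) → (H₂ →L[ℂ] H₂)}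

theorem intertwines_of_mem_span
    (hφ₁add : ∀ X ∈ ℬ, ∀ Y ∈ ℬ, φ₁ (X + Y) = φ₁ X + φ₁ Y)
    (hφ₂add : ∀ X ∈ ℬ, ∀ Y ∈ ℬ, φ₂ (X + Y) = φ₂ X + φ₂ Y)
    (hφ₁smul : ∀ (c : ℂ), ∀ X ∈ ℬ, φ₁ (c • X) = c • φ₁ X)
    (hφ₂smul : ∀ (c : ℂ), ∀ X ∈ ℬ, φ₂ (c • X) = c • φ₂ X)
    {s : Set (Hb →L[ℂ] Hb)} (hsℬ : s ⊆ ℬ) (hs : ∀ x ∈ s, Intertwines U (φ₁ x) (φ₂ x))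
    {Z : Hb →L[ℂ] Hb} (hZ : Z ∈ Submodule.span ℂ s) : Intertwines U (φ₁ Z) (φ₂ Z) := by
  have hspanℬ : ∀ x ∈ Submodule.span ℂ s, x ∈ ℬ := fun x hx =>
    (Submodule.span_le (p := ℬ.toSubalgebra.toSubmodule)).2 hsℬ hx
  induction hZ using Submodule.span_induction with
  | mem x hx => exact hs x hx
  | zero =>
    have hφ₁zero : φ₁ 0 = 0 := by simpa using hφ₁add 0 (zero_mem _) 0 (zero_mem _)
    have hφ₂zero : φ₂ 0 = 0 := by simpa using hφ₂add 0 (zero_mem _) 0 (zero_mem _)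
    intro x
    simp [hφ₁zero, hφ₂zero]
  | add x y hx hy ihx ihy =>
    rw [hφ₁add _ (hspanℬ x hx) _ (hspanℬ y hy), hφ₂add _ (hspanℬ x hx) _ (hspanℬ y hy)]
    exact ihx.add ihy
  | smul c x hx ih =>
    rw [hφ₁smul c _ (hspanℬ x hx), hφ₂smul c _ (hspanℬ x hx)]
    exact ih.smul c

theorem intertwines_of_weakStar_span (𝒜 : Subalgebra ℂ (Hb →L[ℂ] Hb))
    (h𝒜ℬ : (𝒜 : Set (Hb →L[ℂ] Hb)) ⊆ ℬ)
    (hspan : ∀ X ∈ ℬ, ∃ (ι : Type) (l : Filter ι), l.NeBot ∧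
      ∃ (Y : ι → Hb →L[ℂ] Hb) (Cb : ℝ),
        (∀ i, Y i ∈ Submodule.span ℂ {x : Hb →L[ℂ] Hb | ∃ a ∈ 𝒜, ∃ b ∈ 𝒜, x = a * star b} ∧
          ‖Y i‖ ≤ Cb) ∧
        ∀ ξ η : Hb, Tendsto (fun i => ⟪Y i ξ, η⟫_ℂ) l (𝓝 ⟪X ξ, η⟫_ℂ))
    (hφ₁add : ∀ X ∈ ℬ, ∀ Y ∈ ℬ, φ₁ (X + Y) = φ₁ X + φ₁ Y)
    (hφ₂add : ∀ X ∈ ℬ, ∀ Y ∈ ℬ, φ₂ (X + Y) = φ₂ X + φ₂ Y)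
    (hφ₁smul : ∀ (c : ℂ), ∀ X ∈ ℬ, φ₁ (c • X) = c • φ₁ X)
    (hφ₂smul : ∀ (c : ℂ), ∀ X ∈ ℬ, φ₂ (c • X) = c • φ₂ X)
    (hφ₁star : ∀ X ∈ ℬ, φ₁ (star X) = (φ₁ X).adjoint)
    (hφ₂star : ∀ X ∈ ℬ, φ₂ (star X) = (φ₂ X).adjoint)
    (hφ₁mor : ∀ a ∈ 𝒜, ∀ X ∈ ℬ, φ₁ (a * X) = φ₁ a * φ₁ X)
    (hφ₂mor : ∀ a ∈ 𝒜, ∀ X ∈ ℬ, φ₂ (a * X) = φ₂ a * φ₂ X)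
    (hφ₁wstar : WeakStarContinuousOn.{0} ℬ φ₁) (hφ₂wstar : WeakStarContinuousOn.{0} ℬ φ₂)
    (hU : ∀ a ∈ 𝒜, Intertwines U (φ₁ a) (φ₂ a)) {X : Hb →L[ℂ] Hb} (hX : X ∈ ℬ) :
    Intertwines U (φ₁ X) (φ₂ X) := by
  have hgen : ∀ x ∈ {x : Hb →L[ℂ] Hb | ∃ a ∈ 𝒜, ∃ b ∈ 𝒜, x = a * star b},
      Intertwines U (φ₁ x) (φ₂ x) := by
    rintro _ ⟨a, ha, b, hb, rfl⟩
    rw [hφ₁mor a ha _ (star_mem (h𝒜ℬ hb)), hφ₂mor a ha _ (star_mem (h𝒜ℬ hb)),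
      hφ₁star b (h𝒜ℬ hb), hφ₂star b (h𝒜ℬ hb)]
    exact (hU a ha).mul (hU b hb).adjoint
  have hgenℬ : {x : Hb →L[ℂ] Hb | ∃ a ∈ 𝒜, ∃ b ∈ 𝒜, x = a * star b} ⊆ ℬ := by
    rintro _ ⟨a, ha, b, hb, rfl⟩
    exact mul_mem (h𝒜ℬ ha) (star_mem (h𝒜ℬ hb))
  obtain ⟨ι, l, hl, Y, Cb, hY, hYX⟩ := hspan X hX
  have hYℬ : ∀ i, Y i ∈ ℬ := fun i =>
    (Submodule.span_le (p := ℬ.toSubalgebra.toSubmodule)).2 hgenℬ (hY i).1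
  refine Intertwines.of_tendsto (l := l) (fun i =>
    intertwines_of_mem_span hφ₁add hφ₂add hφ₁smul hφ₂smul hgenℬ hgen (hY i).1) ?_ ?_
  · exact hφ₁wstar l Y X Cb hYℬ hX (fun i => (hY i).2) hYX
  · exact hφ₂wstar l Y X Cb hYℬ hX (fun i => (hY i).2) hYX

end MorphismIntertwining

section StinespringUniqueness

variable {Hb H₁ H₂ Hπ₁ Hπ₂ : Type*}
  [NormedAddCommGroup Hb] [InnerProductSpace ℂ Hb] [CompleteSpace Hb]
  [NormedAddCommGroup H₁] [InnerProductSpace ℂ H₁] [CompleteSpace H₁]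
  [NormedAddCommGroup H₂] [InnerProductSpace ℂ H₂] [CompleteSpace H₂]
  [NormedAddCommGroup Hπ₁] [InnerProductSpace ℂ Hπ₁] [CompleteSpace Hπ₁]
  [NormedAddCommGroup Hπ₂] [InnerProductSpace ℂ Hπ₂] [CompleteSpace Hπ₂]

theorem exists_unique_unitary_of_intertwines_stinespring {ℬ : StarSubalgebra ℂ (Hb →L[ℂ] Hb)}
    {φ₁ : (Hb →L[ℂ] Hb) → (H₁ →L[ℂ] H₁)} {φ₂ : (Hb →L[ℂ] Hb) → (H₂ →L[ℂ] H₂)}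
    {π₁ : (Hb →L[ℂ] Hb) → (Hπ₁ →L[ℂ] Hπ₁)} {π₂ : (Hb →L[ℂ] Hb) → (Hπ₂ →L[ℂ] Hπ₂)}
    (hπ₁mul : ∀ X ∈ ℬ, ∀ Y ∈ ℬ, π₁ (X * Y) = π₁ X * π₁ Y)
    (hπ₂mul : ∀ X ∈ ℬ, ∀ Y ∈ ℬ, π₂ (X * Y) = π₂ X * π₂ Y)
    (hπ₁star : ∀ X ∈ ℬ, π₁ (star X) = star (π₁ X))
    (hπ₂star : ∀ X ∈ ℬ, π₂ (star X) = star (π₂ X))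
    (hπ₁one : π₁ 1 = 1) (hπ₂one : π₂ 1 = 1) {V₁ : H₁ →L[ℂ] Hπ₁} {V₂ : H₂ →L[ℂ] Hπ₂}
    (hSt₁ : ∀ X ∈ ℬ, φ₁ X = V₁.adjoint ∘L π₁ X ∘L V₁)
    (hSt₂ : ∀ X ∈ ℬ, φ₂ X = V₂.adjoint ∘L π₂ X ∘L V₂)
    (hmin₁ : (Submodule.span ℂ
      {y : Hπ₁ | ∃ X ∈ ℬ, ∃ h : H₁, y = π₁ X (V₁ h)}).topologicalClosure = ⊤)
    (hmin₂ : (Submodule.span ℂ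
      {y : Hπ₂ | ∃ X ∈ ℬ, ∃ h : H₂, y = π₂ X (V₂ h)}).topologicalClosure = ⊤)
    {U : H₁ ≃ₗᵢ[ℂ] H₂} (hU : ∀ X ∈ ℬ, Intertwines U (φ₁ X) (φ₂ X)) :
    ∃! W : Hπ₁ ≃ₗᵢ[ℂ] Hπ₂,
      (∀ h : H₁, W (V₁ h) = V₂ (U h)) ∧ ∀ X ∈ ℬ, ∀ ξ : Hπ₁, W (π₁ X ξ) = π₂ X (W ξ) := by
  let f : ℬ × H₁ → Hπ₁ := fun p => π₁ p.1 (V₁ p.2)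
  let g : ℬ × H₁ → Hπ₂ := fun p => π₂ p.1 (V₂ (U p.2))
  have hf : (Submodule.span ℂ (Set.range f)).topologicalClosure = ⊤ := by
    convert hmin₁ using 4
    ext y
    simp [f, eq_comm]
  have hg : (Submodule.span ℂ (Set.range g)).topologicalClosure = ⊤ := by
    convert hmin₂ using 4
    ext y
    simp [g, eq_comm, U.surjective.exists]
  have hfg : ∀ p q, ⟪f p, f q⟫_ℂ = ⟪g p, g q⟫_ℂ := fun p q => by
    have hqp := mul_mem (star_mem q.1.2) p.1.2
    rw [inner_stinespring hπ₁mul hπ₁star hSt₁ p.1.2 q.1.2,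
      inner_stinespring hπ₂mul hπ₂star hSt₂ p.1.2 q.1.2, ← hU _ hqp, U.inner_map_map]
  obtain ⟨W, hW, hWuniq⟩ := exists_unique_linearIsometryEquiv_of_inner_eq f g hfg hf hg
  have hext : ∀ T T' : Hπ₁ →L[ℂ] Hπ₂, (∀ p, T (f p) = T' (f p)) → T = T' := fun T T' h =>
    ContinuousLinearMap.ext_on (Submodule.dense_iff_topologicalClosure_eq_top.2 hf)
      (by rintro _ ⟨p, rfl⟩; exact h p)
  have hWV : ∀ h, W (V₁ h) = V₂ (U h) := fun h => by
    simpa [f, g, hπ₁one, hπ₂one] using hW (1, h)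
  have hWπ : ∀ X ∈ ℬ, ∀ ξ, W (π₁ X ξ) = π₂ X (W ξ) := fun X hX => by
    refine DFunLike.congr_fun (hext ((W : Hπ₁ →L[ℂ] Hπ₂) ∘L π₁ X)
      (π₂ X ∘L (W : Hπ₁ →L[ℂ] Hπ₂)) fun p => ?_)
    have hXp := hW (⟨X * p.1, mul_mem hX p.1.2⟩, p.2)
    simp only [f, g, hπ₁mul X hX p.1 p.1.2, hπ₂mul X hX p.1 p.1.2, mul_apply_eq_comp] at hXp
    change W (π₁ X (f p)) = π₂ X (W (f p))
    rw [hW p]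
    exact hXp
  refine ⟨W, ⟨hWV, hWπ⟩, fun W' ⟨hW'V, hW'π⟩ => hWuniq W' fun p => ?_⟩
  simp only [f, g, hW'π _ p.1.2, hW'V]

end StinespringUniqueness

theorem stmt19_general {Hb H₁ H₂ Hπ₁ Hπ₂ : Type*}
    [NormedAddCommGroup Hb] [InnerProductSpace ℂ Hb] [CompleteSpace Hb]
    [NormedAddCommGroup H₁] [InnerProductSpace ℂ H₁] [CompleteSpace H₁]
    [NormedAddCommGroup H₂] [InnerProductSpace ℂ H₂] [CompleteSpace H₂]
    [NormedAddCommGroup Hπ₁] [InnerProductSpace ℂ Hπ₁] [CompleteSpace Hπ₁]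
    [NormedAddCommGroup Hπ₂] [InnerProductSpace ℂ Hπ₂] [CompleteSpace Hπ₂]
    (ℬ : VonNeumannAlgebra Hb)
    -- 𝒜 is a unital subalgebra of ℬ
    (𝒜 : Subalgebra ℂ (Hb →L[ℂ] Hb)) (h𝒜ℬ : (𝒜 : Set (Hb →L[ℂ] Hb)) ⊆ ℬ)
    -- ℬ is the weak-* closed linear span of 𝒜𝒜^* (bounded WOT-limits of nets from it)
    (hspan : ∀ X ∈ ℬ, ∃ (ι : Type) (l : Filter ι), l.NeBot ∧
      ∃ (Y : ι → Hb →L[ℂ] Hb) (Cb : ℝ),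
        (∀ i, Y i ∈ Submodule.span ℂ {x : Hb →L[ℂ] Hb | ∃ a ∈ 𝒜, ∃ b ∈ 𝒜, x = a * star b} ∧
          ‖Y i‖ ≤ Cb) ∧
        ∀ ξ η : Hb, Tendsto (fun i => ⟪Y i ξ, η⟫_ℂ) l (𝓝 ⟪X ξ, η⟫_ℂ))
    -- the maps φ₁, φ₂
    (φ₁ : (Hb →L[ℂ] Hb) → (H₁ →L[ℂ] H₁)) (φ₂ : (Hb →L[ℂ] Hb) → (H₂ →L[ℂ] H₂))
    -- φᵢ are unital, linear, completely positive on ℬ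
    (hφ₁add : ∀ X ∈ ℬ, ∀ Y ∈ ℬ, φ₁ (X + Y) = φ₁ X + φ₁ Y)
    (hφ₂add : ∀ X ∈ ℬ, ∀ Y ∈ ℬ, φ₂ (X + Y) = φ₂ X + φ₂ Y)
    (hφ₁smul : ∀ (c : ℂ), ∀ X ∈ ℬ, φ₁ (c • X) = c • φ₁ X)
    (hφ₂smul : ∀ (c : ℂ), ∀ X ∈ ℬ, φ₂ (c • X) = c • φ₂ X)
    -- φᵢ are 𝒜-morphisms
    (hφ₁mor : ∀ a ∈ 𝒜, ∀ X ∈ ℬ, φ₁ (a * X) = φ₁ a * φ₁ X)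
    (hφ₂mor : ∀ a ∈ 𝒜, ∀ X ∈ ℬ, φ₂ (a * X) = φ₂ a * φ₂ X)
    -- φᵢ are weak-* continuous (WOT-continuous along bounded nets of elements of ℬ)
    (hφ₁wstar : ∀ {ι : Type*} (l : Filter ι) (X : ι → Hb →L[ℂ] Hb) (X₀ : Hb →L[ℂ] Hb)
      (Cb : ℝ), (∀ i, X i ∈ ℬ) → X₀ ∈ ℬ → (∀ i, ‖X i‖ ≤ Cb) →
      (∀ ξ η : Hb, Tendsto (fun i => ⟪X i ξ, η⟫_ℂ) l (𝓝 ⟪X₀ ξ, η⟫_ℂ)) →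
      ∀ ξ η : H₁, Tendsto (fun i => ⟪φ₁ (X i) ξ, η⟫_ℂ) l (𝓝 ⟪φ₁ X₀ ξ, η⟫_ℂ))
    (hφ₂wstar : ∀ {ι : Type*} (l : Filter ι) (X : ι → Hb →L[ℂ] Hb) (X₀ : Hb →L[ℂ] Hb)
      (Cb : ℝ), (∀ i, X i ∈ ℬ) → X₀ ∈ ℬ → (∀ i, ‖X i‖ ≤ Cb) →
      (∀ ξ η : Hb, Tendsto (fun i => ⟪X i ξ, η⟫_ℂ) l (𝓝 ⟪X₀ ξ, η⟫_ℂ)) →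
      ∀ ξ η : H₂, Tendsto (fun i => ⟪φ₂ (X i) ξ, η⟫_ℂ) l (𝓝 ⟪φ₂ X₀ ξ, η⟫_ℂ))
    -- Stinespring representations (πᵢ, Vᵢ, H_{πᵢ}) of φᵢ: πᵢ is a *-homomorphism on ℬ
    (π₁ : (Hb →L[ℂ] Hb) → (Hπ₁ →L[ℂ] Hπ₁)) (π₂ : (Hb →L[ℂ] Hb) → (Hπ₂ →L[ℂ] Hπ₂))
    (hπ₁mul : ∀ X ∈ ℬ, ∀ Y ∈ ℬ, π₁ (X * Y) = π₁ X * π₁ Y)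
    (hπ₂mul : ∀ X ∈ ℬ, ∀ Y ∈ ℬ, π₂ (X * Y) = π₂ X * π₂ Y)
    (hπ₁star : ∀ X ∈ ℬ, π₁ (star X) = star (π₁ X))
    (hπ₂star : ∀ X ∈ ℬ, π₂ (star X) = star (π₂ X))
    (hπ₁one : π₁ 1 = 1) (hπ₂one : π₂ 1 = 1)
    (V₁ : H₁ →L[ℂ] Hπ₁)
    (V₂ : H₂ →L[ℂ] Hπ₂)
    (hSt₁ : ∀ X ∈ ℬ, φ₁ X = V₁.adjoint ∘L π₁ X ∘L V₁)
    (hSt₂ : ∀ X ∈ ℬ, φ₂ X = V₂.adjoint ∘L π₂ X ∘L V₂)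
    -- minimality of the Stinespring representations
    (hmin₁ : (Submodule.span ℂ
      {y : Hπ₁ | ∃ X ∈ ℬ, ∃ h : H₁, y = π₁ X (V₁ h)}).topologicalClosure = ⊤)
    (hmin₂ : (Submodule.span ℂ
      {y : Hπ₂ | ∃ X ∈ ℬ, ∃ h : H₂, y = π₂ X (V₂ h)}).topologicalClosure = ⊤) :
    ∀ U : H₁ ≃ₗᵢ[ℂ] H₂, (∀ a ∈ 𝒜, ∀ h : H₁, U (φ₁ a h) = φ₂ a (U h)) →
      ∃! W : Hπ₁ ≃ₗᵢ[ℂ] Hπ₂,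
        (∀ h : H₁, W (V₁ h) = V₂ (U h)) ∧
        ∀ X ∈ ℬ, ∀ ξ : Hπ₁, W (π₁ X ξ) = π₂ X (W ξ) := by
  intro U hU
  have hφ₁star : ∀ X ∈ ℬ, φ₁ (star X) = (φ₁ X).adjoint := fun _ hX =>
    map_star_of_stinespring (ℬ := ℬ.toStarSubalgebra) hπ₁star hSt₁ hX
  have hφ₂star : ∀ X ∈ ℬ, φ₂ (star X) = (φ₂ X).adjoint := fun _ hX =>
    map_star_of_stinespring (ℬ := ℬ.toStarSubalgebra) hπ₂star hSt₂ hX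
  have hUφ : ∀ X ∈ ℬ, Intertwines U (φ₁ X) (φ₂ X) := fun _ hX =>
    intertwines_of_weakStar_span (ℬ := ℬ.toStarSubalgebra) 𝒜 h𝒜ℬ hspan hφ₁add hφ₂add hφ₁smul
      hφ₂smul hφ₁star hφ₂star hφ₁mor hφ₂mor (WeakStarContinuousOn.down hφ₁wstar)
      (WeakStarContinuousOn.down hφ₂wstar) hU hX
  exact exists_unique_unitary_of_intertwines_stinespring (ℬ := ℬ.toStarSubalgebra) hπ₁mul hπ₂mul
    hπ₁star hπ₂star hπ₁one hπ₂one hSt₁ hSt₂ hmin₁ hmin₂ hUφ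

/-- weak-* continuous version of Arveson's uniqueness lemma. If `ℬ` is a
von Neumann algebra (realized on a Hilbert space `Hb`), `𝒜 ⊆ ℬ` a unital subalgebra with
`ℬ` the weak-* closed linear span of `𝒜𝒜^*` (formalized via bounded WOT-limits of nets),
and `φᵢ : ℬ → L(Hᵢ)` are weak-* continuous `𝒜`-morphisms with minimal Stinespring
representations `(πᵢ, Vᵢ, H_{πᵢ})`, then every unitary `U : H₁ → H₂` intertwining `φ₁`
and `φ₂` on `𝒜` lifts to a unique unitary `W : H_{π₁} → H_{π₂}` with `WV₁ = V₂U` and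
`Wπ₁(x) = π₂(x)W` for all `x ∈ ℬ`. -/
theorem stmt19 {Hb H₁ H₂ Hπ₁ Hπ₂ : Type*}
    [NormedAddCommGroup Hb] [InnerProductSpace ℂ Hb] [CompleteSpace Hb]
    [NormedAddCommGroup H₁] [InnerProductSpace ℂ H₁] [CompleteSpace H₁]
    [NormedAddCommGroup H₂] [InnerProductSpace ℂ H₂] [CompleteSpace H₂]
    [NormedAddCommGroup Hπ₁] [InnerProductSpace ℂ Hπ₁] [CompleteSpace Hπ₁]
    [NormedAddCommGroup Hπ₂] [InnerProductSpace ℂ Hπ₂] [CompleteSpace Hπ₂]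
    (ℬ : VonNeumannAlgebra Hb)
    -- 𝒜 is a unital subalgebra of ℬ
    (𝒜 : Subalgebra ℂ (Hb →L[ℂ] Hb)) (h𝒜ℬ : (𝒜 : Set (Hb →L[ℂ] Hb)) ⊆ ℬ)
    -- ℬ is the weak-* closed linear span of 𝒜𝒜^* (bounded WOT-limits of nets from it)
    (hspan : ∀ X ∈ ℬ, ∃ (ι : Type) (l : Filter ι), l.NeBot ∧
      ∃ (Y : ι → Hb →L[ℂ] Hb) (Cb : ℝ),
        (∀ i, Y i ∈ Submodule.span ℂ {x : Hb →L[ℂ] Hb | ∃ a ∈ 𝒜, ∃ b ∈ 𝒜, x = a * star b} ∧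
          ‖Y i‖ ≤ Cb) ∧
        ∀ ξ η : Hb, Tendsto (fun i => ⟪Y i ξ, η⟫_ℂ) l (𝓝 ⟪X ξ, η⟫_ℂ))
    -- the maps φ₁, φ₂
    (φ₁ : (Hb →L[ℂ] Hb) → (H₁ →L[ℂ] H₁)) (φ₂ : (Hb →L[ℂ] Hb) → (H₂ →L[ℂ] H₂))
    -- φᵢ are unital, linear, completely positive on ℬ
    (hφ₁add : ∀ X ∈ ℬ, ∀ Y ∈ ℬ, φ₁ (X + Y) = φ₁ X + φ₁ Y)
    (hφ₂add : ∀ X ∈ ℬ, ∀ Y ∈ ℬ, φ₂ (X + Y) = φ₂ X + φ₂ Y)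
    (hφ₁smul : ∀ (c : ℂ), ∀ X ∈ ℬ, φ₁ (c • X) = c • φ₁ X)
    (hφ₂smul : ∀ (c : ℂ), ∀ X ∈ ℬ, φ₂ (c • X) = c • φ₂ X)
    (hφ₁one : φ₁ 1 = 1) (hφ₂one : φ₂ 1 = 1)
    (hφ₁cp : ∀ (n : ℕ) (A : Fin n → Hb →L[ℂ] Hb), (∀ i, A i ∈ ℬ) →
      ∀ x : Fin n → H₁, 0 ≤ (∑ i, ∑ j, ⟪φ₁ (star (A i) * A j) (x j), x i⟫_ℂ).re)
    (hφ₂cp : ∀ (n : ℕ) (A : Fin n → Hb →L[ℂ] Hb), (∀ i, A i ∈ ℬ) →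
      ∀ x : Fin n → H₂, 0 ≤ (∑ i, ∑ j, ⟪φ₂ (star (A i) * A j) (x j), x i⟫_ℂ).re)
    -- φᵢ are 𝒜-morphisms
    (hφ₁mor : ∀ a ∈ 𝒜, ∀ X ∈ ℬ, φ₁ (a * X) = φ₁ a * φ₁ X)
    (hφ₂mor : ∀ a ∈ 𝒜, ∀ X ∈ ℬ, φ₂ (a * X) = φ₂ a * φ₂ X)
    -- φᵢ are weak-* continuous (WOT-continuous along bounded nets of elements of ℬ)
    (hφ₁wstar : ∀ {ι : Type*} (l : Filter ι) (X : ι → Hb →L[ℂ] Hb) (X₀ : Hb →L[ℂ] Hb)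
      (Cb : ℝ), (∀ i, X i ∈ ℬ) → X₀ ∈ ℬ → (∀ i, ‖X i‖ ≤ Cb) →
      (∀ ξ η : Hb, Tendsto (fun i => ⟪X i ξ, η⟫_ℂ) l (𝓝 ⟪X₀ ξ, η⟫_ℂ)) →
      ∀ ξ η : H₁, Tendsto (fun i => ⟪φ₁ (X i) ξ, η⟫_ℂ) l (𝓝 ⟪φ₁ X₀ ξ, η⟫_ℂ))
    (hφ₂wstar : ∀ {ι : Type*} (l : Filter ι) (X : ι → Hb →L[ℂ] Hb) (X₀ : Hb →L[ℂ] Hb)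
      (Cb : ℝ), (∀ i, X i ∈ ℬ) → X₀ ∈ ℬ → (∀ i, ‖X i‖ ≤ Cb) →
      (∀ ξ η : Hb, Tendsto (fun i => ⟪X i ξ, η⟫_ℂ) l (𝓝 ⟪X₀ ξ, η⟫_ℂ)) →
      ∀ ξ η : H₂, Tendsto (fun i => ⟪φ₂ (X i) ξ, η⟫_ℂ) l (𝓝 ⟪φ₂ X₀ ξ, η⟫_ℂ))
    -- Stinespring representations (πᵢ, Vᵢ, H_{πᵢ}) of φᵢ: πᵢ is a *-homomorphism on ℬ
    (π₁ : (Hb →L[ℂ] Hb) → (Hπ₁ →L[ℂ] Hπ₁)) (π₂ : (Hb →L[ℂ] Hb) → (Hπ₂ →L[ℂ] Hπ₂))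
    (hπ₁add : ∀ X ∈ ℬ, ∀ Y ∈ ℬ, π₁ (X + Y) = π₁ X + π₁ Y)
    (hπ₂add : ∀ X ∈ ℬ, ∀ Y ∈ ℬ, π₂ (X + Y) = π₂ X + π₂ Y)
    (hπ₁smul : ∀ (c : ℂ), ∀ X ∈ ℬ, π₁ (c • X) = c • π₁ X)
    (hπ₂smul : ∀ (c : ℂ), ∀ X ∈ ℬ, π₂ (c • X) = c • π₂ X)
    (hπ₁mul : ∀ X ∈ ℬ, ∀ Y ∈ ℬ, π₁ (X * Y) = π₁ X * π₁ Y)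
    (hπ₂mul : ∀ X ∈ ℬ, ∀ Y ∈ ℬ, π₂ (X * Y) = π₂ X * π₂ Y)
    (hπ₁star : ∀ X ∈ ℬ, π₁ (star X) = star (π₁ X))
    (hπ₂star : ∀ X ∈ ℬ, π₂ (star X) = star (π₂ X))
    (hπ₁one : π₁ 1 = 1) (hπ₂one : π₂ 1 = 1)
    (V₁ : H₁ →L[ℂ] Hπ₁) (hV₁ : ∀ h, ‖V₁ h‖ = ‖h‖)
    (V₂ : H₂ →L[ℂ] Hπ₂) (hV₂ : ∀ h, ‖V₂ h‖ = ‖h‖)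
    (hSt₁ : ∀ X ∈ ℬ, φ₁ X = V₁.adjoint ∘L π₁ X ∘L V₁)
    (hSt₂ : ∀ X ∈ ℬ, φ₂ X = V₂.adjoint ∘L π₂ X ∘L V₂)
    -- minimality of the Stinespring representations
    (hmin₁ : (Submodule.span ℂ
      {y : Hπ₁ | ∃ X ∈ ℬ, ∃ h : H₁, y = π₁ X (V₁ h)}).topologicalClosure = ⊤)
    (hmin₂ : (Submodule.span ℂ
      {y : Hπ₂ | ∃ X ∈ ℬ, ∃ h : H₂, y = π₂ X (V₂ h)}).topologicalClosure = ⊤) :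
    ∀ U : H₁ ≃ₗᵢ[ℂ] H₂, (∀ a ∈ 𝒜, ∀ h : H₁, U (φ₁ a h) = φ₂ a (U h)) →
      ∃! W : Hπ₁ ≃ₗᵢ[ℂ] Hπ₂,
        (∀ h : H₁, W (V₁ h) = V₂ (U h)) ∧
        ∀ X ∈ ℬ, ∀ ξ : Hπ₁, W (π₁ X ξ) = π₂ X (W ξ) :=
  stmt19_general ℬ 𝒜 h𝒜ℬ hspan φ₁ φ₂ hφ₁add hφ₂add hφ₁smul hφ₂smul hφ₁mor hφ₂mor hφ₁wstar hφ₂wstar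
    π₁ π₂ hπ₁mul hπ₂mul hπ₁star hπ₂star hπ₁one hπ₂one V₁ V₂ hSt₁ hSt₂ hmin₁ hmin₂
end
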